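/- arXiv:2411.19047 — 6 statements merged into one kernel-verified Lean document; each statement's English description precedes it below -/
import Mathlib

section
/- Let (Z,d) be a length metric space and μ a Borel measure on Z that is doubling with constant C_v (i.e. μ(B(z,2r)) ≤ C_v μ(B(z,r)) for all z ∈ Z and r > 0). Then for every z ∈ Z and all 0 ≤ r < R, μ(B(z,R) \ closure(B(z,r))) ≤ 6^γ ((R−r)/R)^γ μ(B(z,R)), where γ = log(1 + C_v^{-4})/log 3. -/
open MeasureTheory Metric Set

/-- A metric space is a length space: every pair of points admits approximate
midpoints (the standard characterization used here). -/
def IsLengthSpace (Z : Type*) [MetricSpace Z] : Prop :=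
  ∀ x y : Z, ∀ ε > (0 : ℝ), ∃ z : Z,
    dist x z ≤ dist x y / 2 + ε ∧ dist z y ≤ dist x y / 2 + ε

lemma dyadic_point {Z : Type*} [MetricSpace Z] (hlen : IsLengthSpace Z) :
    ∀ n : ℕ, ∀ x y : Z, ∀ ε : ℝ, 0 < ε → ∀ k : ℕ, k ≤ 2^n →
      ∃ p : Z, (2:ℝ)^n * dist x p ≤ (k : ℝ) * dist x y + 2^n * ε ∧
        (2:ℝ)^n * dist p y ≤ ((2:ℝ)^n - k) * dist x y + 2^n * ε := by
  intro n
  induction n with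
  | zero =>
    intro x y ε hε k hk
    interval_cases k
    · exact ⟨x, by simp; linarith, by simp; linarith⟩
    · exact ⟨y, by simp; linarith, by simp; linarith [dist_nonneg (x := x) (y := y)]⟩
  | succ n ih =>
    intro x y ε hε k hk
    have hd0 : (0:ℝ) ≤ dist x y := dist_nonneg
    have hδ : (0:ℝ) < ε/3 := by linarith
    obtain ⟨m, hm1, hm2⟩ := hlen x y (ε/3) hδ
    have hB : (0:ℝ) < 2^n := by positivity
    have h2s : ((2:ℝ)^(n+1)) = 2 * 2^n := by rw [pow_succ]; ring
    rw [h2s]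
    by_cases hk' : k ≤ 2^n
    · obtain ⟨p, hp1, hp2⟩ := ih x m (ε/3) hδ k hk'
      have hkB : (k:ℝ) ≤ 2^n := by exact_mod_cast hk'
      have hk0 : (0:ℝ) ≤ (k:ℝ) := by positivity
      have key1 : (k:ℝ) * dist x m ≤ (k:ℝ) * (dist x y/2 + ε/3) :=
        mul_le_mul_of_nonneg_left hm1 hk0
      have key2 : ((2:ℝ)^n - k) * dist x m ≤ ((2:ℝ)^n - k) * (dist x y/2 + ε/3) :=
        mul_le_mul_of_nonneg_left hm1 (by linarith)
      have key3 : (2:ℝ)^n * dist m y ≤ (2:ℝ)^n * (dist x y/2 + ε/3) :=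
        mul_le_mul_of_nonneg_left hm2 hB.le
      have e1 : (k:ℝ) * (ε/3) ≤ 2^n * (ε/3) := mul_le_mul_of_nonneg_right hkB hδ.le
      have htri : dist p y ≤ dist p m + dist m y := dist_triangle _ _ _
      have htri' : (2:ℝ)^n * dist p y ≤ 2^n * dist p m + 2^n * dist m y := by nlinarith
      exact ⟨p, by nlinarith, by nlinarith⟩
    · push_neg at hk'
      have hkn : 2^n ≤ k := hk'.le
      obtain ⟨p, hp1, hp2⟩ := ih m y (ε/3) hδ (k - 2^n) (by omega)
      have hjc : ((k - 2^n : ℕ):ℝ) = (k:ℝ) - 2^n := by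
        push_cast [Nat.cast_sub hkn]; ring
      rw [hjc] at hp1 hp2
      have hkB : (2:ℝ)^n ≤ (k:ℝ) := by exact_mod_cast hkn
      have hk2B : (k:ℝ) ≤ 2 * 2^n := by
        have : (k:ℝ) ≤ 2^(n+1) := by exact_mod_cast hk
        rw [h2s] at this; exact this
      have key1 : ((k:ℝ) - 2^n) * dist m y ≤ ((k:ℝ) - 2^n) * (dist x y/2 + ε/3) :=
        mul_le_mul_of_nonneg_left hm2 (by linarith)
      have key2 : ((2:ℝ)^n - ((k:ℝ) - 2^n)) * dist m y ≤
          ((2:ℝ)^n - ((k:ℝ) - 2^n)) * (dist x y/2 + ε/3) :=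
        mul_le_mul_of_nonneg_left hm2 (by linarith)
      have key3 : (2:ℝ)^n * dist x m ≤ (2:ℝ)^n * (dist x y/2 + ε/3) :=
        mul_le_mul_of_nonneg_left hm1 hB.le
      have htri : dist x p ≤ dist x m + dist m p := dist_triangle _ _ _
      have htri' : (2:ℝ)^n * dist x p ≤ 2^n * dist x m + 2^n * dist m p := by nlinarith
      have hεB : (0:ℝ) ≤ 2^n * (ε/3) := by positivity
      exact ⟨p, by nlinarith, by nlinarith⟩

lemma point_at_radius {Z : Type*} [MetricSpace Z] (hlen : IsLengthSpace Z)
    (z x : Z) (a ε : ℝ) (ha : 0 ≤ a) (hax : a ≤ dist z x) (hε : 0 < ε) :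
    ∃ y : Z, a - ε ≤ dist z y ∧ dist z y ≤ a + ε ∧ dist y x ≤ dist z x - a + ε := by
  set d := dist z x with hd
  have hd0 : 0 ≤ d := ha.trans hax
  rcases eq_or_lt_of_le hd0 with h0 | hdpos
  · have ha0 : a = 0 := le_antisymm (by linarith) ha
    refine ⟨z, by simp [dist_self]; linarith, by simp [dist_self]; linarith, ?_⟩
    rw [← hd, ← h0, ha0]; linarith
  · -- choose n with d / 2^n ≤ ε/2
    obtain ⟨n, hn⟩ := pow_unbounded_of_one_lt (d / (ε/2)) (by norm_num : (1:ℝ) < 2)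
    have hB : (0:ℝ) < 2^n := by positivity
    have hdn : d / 2^n < ε/2 := by
      rw [div_lt_iff₀ hB]
      rw [div_lt_iff₀ (by linarith : (0:ℝ) < ε/2)] at hn
      linarith [hn]
    set k := ⌊a * 2^n / d⌋₊ with hkdef
    have hk2 : (k:ℝ) ≤ a * 2^n / d := Nat.floor_le (by positivity)
    have hk3 : a * 2^n / d < k + 1 := Nat.lt_floor_add_one _
    have hkle : k ≤ 2^n := by
      have h1 : a * 2^n / d ≤ 2^n := by
        rw [div_le_iff₀ hdpos]
        nlinarith
      have : (k:ℝ) ≤ (2^n : ℕ) := by push_cast; linarith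
      exact_mod_cast this
    obtain ⟨p, hp1, hp2⟩ := dyadic_point hlen n z x (ε/2) (by linarith) k hkle
    rw [← hd] at hp1 hp2
    have hkd1 : (k:ℝ) * d ≤ a * 2^n := by
      have := (le_div_iff₀ hdpos).mp hk2
      linarith
    have hkd2 : a * 2^n - d ≤ (k:ℝ) * d := by
      have := (div_lt_iff₀ hdpos).mp hk3
      nlinarith
    have hdn' : d < 2^n * (ε/2) := by
      rw [div_lt_iff₀ hB] at hdn; linarith
    refine ⟨p, ?_, ?_, ?_⟩
    · have h1 : d ≤ dist z p + dist p x := dist_triangle z p x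
      have h1' : (2:ℝ)^n * d ≤ 2^n * (dist z p + dist p x) :=
        mul_le_mul_of_nonneg_left h1 hB.le
      have key : (2:ℝ)^n * (a - ε) ≤ 2^n * dist z p := by nlinarith
      exact (mul_le_mul_iff_right₀ hB).mp key
    · have key : (2:ℝ)^n * dist z p ≤ 2^n * (a + ε) := by nlinarith
      exact (mul_le_mul_iff_right₀ hB).mp key
    · have key : (2:ℝ)^n * dist p x ≤ 2^n * (d - a + ε) := by nlinarith
      exact (mul_le_mul_iff_right₀ hB).mp key

lemma doubling_pow {Z : Type*} [MetricSpace Z] [MeasurableSpace Z] (μ : Measure Z) {Cv : ℝ}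
    (hdoub : ∀ (z : Z) (r : ℝ), 0 < r →
      μ (ball z (2 * r)) ≤ ENNReal.ofReal Cv * μ (ball z r)) :
    ∀ (k : ℕ) (y : Z) (u : ℝ), 0 < u →
      μ (ball y (2^k * u)) ≤ ENNReal.ofReal Cv ^ k * μ (ball y u) := by
  intro k
  induction k with
  | zero => intro y u hu; simp
  | succ k ih =>
    intro y u hu
    have h1 : (2:ℝ)^(k+1) * u = 2 * (2^k * u) := by ring
    rw [h1]
    calc μ (ball y (2 * (2^k * u))) ≤ ENNReal.ofReal Cv * μ (ball y (2^k * u)) :=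
          hdoub y _ (by positivity)
      _ ≤ ENNReal.ofReal Cv * (ENNReal.ofReal Cv ^ k * μ (ball y u)) :=
          mul_le_mul_right (ih y u hu) _
      _ = ENNReal.ofReal Cv ^ (k+1) * μ (ball y u) := by ring

lemma annulus_step {Z : Type*} [MetricSpace Z] [MeasurableSpace Z] [BorelSpace Z]
    (hlen : IsLengthSpace Z) (μ : Measure Z) {Cv : ℝ} (hCv : 1 ≤ Cv)
    (hdoub : ∀ (z : Z) (r : ℝ), 0 < r →
      μ (ball z (2 * r)) ≤ ENNReal.ofReal Cv * μ (ball z r))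
    (z : Z) (R t : ℝ) (ht : 0 < t) (h2t : 2*t ≤ R)
    (hfin : μ (ball z R) ≠ ⊤) :
    μ (ball z R \ ball z (R - t)) ≤
      ENNReal.ofReal (Cv^4) * μ (ball z (R - t) \ ball z (R - 3*t)) := by
  rcases eq_or_ne (μ (ball z R)) 0 with h0 | hpos
  · exact le_trans (le_trans (measure_mono diff_subset) (le_of_eq h0)) (zero_le)
  set O := ball z R \ ball z (R - t) with hO
  set ε := t/100 with hε
  have hεpos : 0 < ε := by rw [hε]; linarith
  set u := t - ε with hu'
  have hu : 0 < u := by rw [hu', hε]; linarith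
  -- maximal 10t-separated subset of O
  obtain ⟨M, hMS⟩ := zorn_subset
      {s : Set Z | s ⊆ O ∧ s.Pairwise fun p q => 10*t ≤ dist p q} (by
    intro c hcS hchain
    refine ⟨⋃₀ c, ⟨?_, ?_⟩, fun s hs => subset_sUnion_of_mem hs⟩
    · exact sUnion_subset fun s hs => (hcS hs).1
    · intro p hp q hq hne
      obtain ⟨s, hsc, hps⟩ := hp
      obtain ⟨s', hsc', hqs⟩ := hq
      rcases hchain.total hsc hsc' with h | h
      · exact (hcS hsc').2 (h hps) hqs hne
      · exact (hcS hsc).2 hps (h hqs) hne)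
  have hMO : M ⊆ O := hMS.prop.1
  have hMsep : M.Pairwise fun p q => 10*t ≤ dist p q := hMS.prop.2
  -- covering property
  have hcov : O ⊆ ⋃ x : M, ball (x : Z) (10*t) := by
    intro w hw
    by_contra hnot
    simp only [mem_iUnion, mem_ball, not_exists, not_lt] at hnot
    have hwM : w ∈ M := by
      have hins : insert w M ∈ {s : Set Z | s ⊆ O ∧ s.Pairwise fun p q => 10*t ≤ dist p q} := by
        refine ⟨insert_subset hw hMO, hMsep.insert fun x hx hne => ⟨?_, ?_⟩⟩
        · exact hnot ⟨x, hx⟩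
        · rw [dist_comm]; exact hnot ⟨x, hx⟩
      have := hMS.2 hins (subset_insert w M)
      exact this (mem_insert w M)
    have := hnot ⟨w, hwM⟩
    simp at this
    linarith
  -- choose points y x at radius ≈ R - 2t
  have hxO : ∀ x : M, R - t ≤ dist z (x:Z) ∧ dist z (x:Z) < R := by
    intro x
    obtain ⟨h1, h2⟩ := hMO x.2
    rw [mem_ball, dist_comm] at h1 h2
    exact ⟨not_lt.mp h2, h1⟩
  have hy : ∀ x : M, ∃ yx : Z, R - 2*t - ε ≤ dist z yx ∧ dist z yx ≤ R - 2*t + ε ∧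
      dist yx (x:Z) ≤ dist z (x:Z) - (R - 2*t) + ε := by
    intro x
    exact point_at_radius hlen z x (R - 2*t) ε (by linarith) (by linarith [(hxO x).1]) hεpos
  choose y hy1 hy2 hy3 using hy
  have hyx : ∀ x : M, dist (y x) (x:Z) ≤ 2*t + ε := by
    intro x
    have := (hxO x).2
    linarith [hy3 x]
  -- inner balls are inside the inner annulus
  have hBxI : ∀ x : M, ball (y x) u ⊆ ball z (R - t) \ ball z (R - 3*t) := by
    intro x w hw
    rw [mem_ball] at hw
    have t1 : dist w z ≤ dist w (y x) + dist (y x) z := dist_triangle _ _ _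
    have t2 : dist z (y x) ≤ dist z w + dist w (y x) := dist_triangle _ _ _
    have e1 := hy1 x
    have e2 := hy2 x
    rw [dist_comm (y x) z] at t1
    constructor
    · rw [mem_ball]
      rw [hu'] at hw
      linarith
    · rw [mem_ball, not_lt, dist_comm]
      rw [hu'] at hw
      linarith
  -- inner balls are pairwise disjoint
  have hdisj : Pairwise (Function.onFun Disjoint fun x : M => ball (y x) u) := by
    intro x x' hne
    apply ball_disjoint_ball
    have hsep : 10*t ≤ dist (x:Z) (x':Z) :=
      hMsep x.2 x'.2 (Subtype.coe_injective.ne hne)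
    have t1 : dist (x:Z) (x':Z) ≤ dist (x:Z) (y x) + dist (y x) (y x') + dist (y x') (x':Z) :=
      dist_triangle4 _ _ _ _
    have := hyx x
    have := hyx x'
    rw [dist_comm (x:Z) (y x)] at t1
    rw [hu', hε]
    rw [hε] at *
    linarith
  -- each inner ball has positive measure
  obtain ⟨k, hk⟩ : ∃ k : ℕ, 2*R ≤ 2^k * u := by
    obtain ⟨k, hk⟩ := pow_unbounded_of_one_lt (2*R/u) (by norm_num : (1:ℝ) < 2)
    exact ⟨k, le_of_lt (by rw [div_lt_iff₀ hu] at hk; linarith)⟩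
  have hup : ∀ x : M, 0 < μ (ball (y x) u) := by
    intro x
    rcases eq_or_ne (μ (ball (y x) u)) 0 with hz0 | hz0
    · exfalso
      have hsub : ball z R ⊆ ball (y x) (2^k * u) := by
        intro w hw
        rw [mem_ball] at hw ⊢
        have t1 : dist w (y x) ≤ dist w z + dist z (y x) := dist_triangle _ _ _
        have := hy2 x
        linarith
      have := le_trans (measure_mono hsub) (doubling_pow μ hdoub k (y x) u hu)
      rw [hz0, mul_zero] at this
      exact hpos (le_antisymm this (zero_le))
    · exact zero_lt_iff.mpr hz0
  -- M is countable
  have hcnt : Set.Countable {x : M | 0 < μ (ball (y x) u)} := by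
    apply MeasureTheory.Measure.countable_meas_pos_of_disjoint_of_meas_iUnion_ne_top μ
      (fun x : M => measurableSet_ball) hdisj
    refine ne_top_of_le_ne_top hfin (measure_mono ?_)
    refine iUnion_subset fun x => (hBxI x).trans ?_
    exact diff_subset.trans (ball_subset_ball (by linarith))
  have : {x : M | 0 < μ (ball (y x) u)} = univ := eq_univ_of_forall fun x => hup x
  rw [this, Set.countable_univ_iff] at hcnt
  haveI : Countable ↥M := hcnt
  -- main estimate
  calc μ O ≤ μ (⋃ x : M, ball (x:Z) (10*t)) := measure_mono hcov
    _ ≤ ∑' x : M, μ (ball (x:Z) (10*t)) := measure_iUnion_le _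
    _ ≤ ∑' x : M, ENNReal.ofReal Cv ^ 4 * μ (ball (y x) u) := by
        refine ENNReal.tsum_le_tsum fun x => ?_
        have hsub : ball (x:Z) (10*t) ⊆ ball (y x) (2^4 * u) := by
          intro w hw
          rw [mem_ball] at hw ⊢
          have t1 : dist w (y x) ≤ dist w (x:Z) + dist (x:Z) (y x) := dist_triangle _ _ _
          have := hyx x
          rw [dist_comm (x:Z) (y x)] at t1
          rw [hu', hε] at *
          norm_num
          linarith
        exact le_trans (measure_mono hsub) (doubling_pow μ hdoub 4 (y x) u hu)
    _ = ENNReal.ofReal Cv ^ 4 * ∑' x : M, μ (ball (y x) u) := ENNReal.tsum_mul_left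
    _ = ENNReal.ofReal Cv ^ 4 * μ (⋃ x : M, ball (y x) u) := by
        rw [measure_iUnion hdisj fun x => measurableSet_ball]
    _ ≤ ENNReal.ofReal Cv ^ 4 * μ (ball z (R - t) \ ball z (R - 3*t)) :=
        mul_le_mul_right (measure_mono (iUnion_subset hBxI)) _
    _ = ENNReal.ofReal (Cv^4) * μ (ball z (R - t) \ ball z (R - 3*t)) := by
        rw [ENNReal.ofReal_pow (by linarith : (0:ℝ) ≤ Cv)]

lemma annulus_step2 {Z : Type*} [MetricSpace Z] [MeasurableSpace Z] [BorelSpace Z]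
    (hlen : IsLengthSpace Z) (μ : Measure Z) {Cv : ℝ} (hCv : 1 ≤ Cv)
    (hdoub : ∀ (z : Z) (r : ℝ), 0 < r →
      μ (ball z (2 * r)) ≤ ENNReal.ofReal Cv * μ (ball z r))
    (z : Z) (R t : ℝ) (ht : 0 < t) (h2t : 2*t ≤ R)
    (hfin : μ (ball z R) ≠ ⊤) :
    μ (ball z R \ ball z (R - t)) ≤
      ENNReal.ofReal (1 + Cv⁻¹ ^ (4:ℕ))⁻¹ * μ (ball z R \ ball z (R - 3*t)) := by
  have hCv0 : (0:ℝ) < Cv := lt_of_lt_of_le one_pos hCv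
  set c := Cv⁻¹ ^ (4:ℕ) with hc
  have hc0 : 0 < c := by positivity
  have hcC : c * Cv^4 = 1 := by rw [hc]; field_simp
  have hstep := annulus_step hlen μ hCv hdoub z R t ht h2t hfin
  set A := μ (ball z R \ ball z (R - t)) with hA
  set B := μ (ball z (R - t) \ ball z (R - 3*t)) with hB
  have hdisjOI : Disjoint (ball z R \ ball z (R-t)) (ball z (R-t) \ ball z (R-3*t)) :=
    disjoint_left.mpr fun w hw hw' => hw.2 hw'.1
  have hunion : A + B ≤ μ (ball z R \ ball z (R - 3*t)) := by
    rw [← measure_union hdisjOI (measurableSet_ball.diff measurableSet_ball)]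
    apply measure_mono
    apply union_subset
    · exact diff_subset_diff_right (ball_subset_ball (by linarith))
    · exact diff_subset_diff_left (ball_subset_ball (by linarith))
  have hcA : ENNReal.ofReal c * A ≤ B := by
    calc ENNReal.ofReal c * A ≤ ENNReal.ofReal c * (ENNReal.ofReal (Cv^4) * B) :=
          mul_le_mul_right hstep _
      _ = ENNReal.ofReal (c * Cv^4) * B := by
          rw [ENNReal.ofReal_mul hc0.le, mul_assoc]
      _ = B := by rw [hcC]; simp
  have hmain : ENNReal.ofReal (1 + c) * A ≤ μ (ball z R \ ball z (R - 3*t)) := by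
    rw [ENNReal.ofReal_add (by norm_num) hc0.le, add_mul, ENNReal.ofReal_one, one_mul]
    exact le_trans (add_le_add_right hcA A) hunion
  calc A = ENNReal.ofReal (1+c)⁻¹ * (ENNReal.ofReal (1+c) * A) := by
        rw [← mul_assoc, ← ENNReal.ofReal_mul (by positivity),
          inv_mul_cancel₀ (by positivity : (1:ℝ)+c ≠ 0), ENNReal.ofReal_one, one_mul]
    _ ≤ ENNReal.ofReal (1+c)⁻¹ * μ (ball z R \ ball z (R - 3*t)) := mul_le_mul_right hmain _

lemma annulus_iter {Z : Type*} [MetricSpace Z] [MeasurableSpace Z] [BorelSpace Z]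
    (hlen : IsLengthSpace Z) (μ : Measure Z) {Cv : ℝ} (hCv : 1 ≤ Cv)
    (hdoub : ∀ (z : Z) (r : ℝ), 0 < r →
      μ (ball z (2 * r)) ≤ ENNReal.ofReal Cv * μ (ball z r))
    (z : Z) (R δ : ℝ) (hδ : 0 < δ) (hfin : μ (ball z R) ≠ ⊤) :
    ∀ m : ℕ, (∀ j < m, 2 * (3^j * δ) ≤ R) →
      μ (ball z R \ ball z (R - δ)) ≤
        ENNReal.ofReal (1 + Cv⁻¹ ^ (4:ℕ))⁻¹ ^ m * μ (ball z R \ ball z (R - 3^m * δ)) := by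
  intro m
  induction m with
  | zero => intro _; simp
  | succ m ih =>
    intro hj
    have h1 := ih (fun j hjm => hj j (Nat.lt_succ_of_lt hjm))
    have h2 := annulus_step2 hlen μ hCv hdoub z R (3^m * δ) (by positivity)
      (hj m (Nat.lt_succ_self m)) hfin
    have h3 : R - 3*(3^m * δ) = R - 3^(m+1) * δ := by rw [pow_succ]; ring
    rw [h3] at h2
    calc μ (ball z R \ ball z (R - δ))
        ≤ ENNReal.ofReal (1 + Cv⁻¹ ^ (4:ℕ))⁻¹ ^ m * μ (ball z R \ ball z (R - 3^m * δ)) := h1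
      _ ≤ ENNReal.ofReal (1 + Cv⁻¹ ^ (4:ℕ))⁻¹ ^ m *
          (ENNReal.ofReal (1 + Cv⁻¹ ^ (4:ℕ))⁻¹ * μ (ball z R \ ball z (R - 3^(m+1) * δ))) :=
          mul_le_mul_right h2 _
      _ = ENNReal.ofReal (1 + Cv⁻¹ ^ (4:ℕ))⁻¹ ^ (m+1) *
          μ (ball z R \ ball z (R - 3^(m+1) * δ)) := by ring

/-- Annulus estimate for doubling measures on length spaces:
`μ(B(z,R) \ cl B(z,r)) ≤ 6^γ ((R−r)/R)^γ μ(B(z,R))` with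
`γ = log(1 + C_v⁻⁴)/log 3`. -/
theorem annulus_estimate_of_doubling_lengthSpace
    {Z : Type*} [MetricSpace Z] [MeasurableSpace Z] [BorelSpace Z]
    (hlen : IsLengthSpace Z) (μ : Measure Z) (Cv : ℝ) (hCv : 1 ≤ Cv)
    (hdoub : ∀ (z : Z) (r : ℝ), 0 < r →
      μ (ball z (2 * r)) ≤ ENNReal.ofReal Cv * μ (ball z r))
    (z : Z) (r R : ℝ) (hr : 0 ≤ r) (hrR : r < R) :
    μ (ball z R \ closure (ball z r)) ≤
      ENNReal.ofReal
        ((6 : ℝ) ^ (Real.log (1 + Cv⁻¹ ^ (4 : ℕ)) / Real.log 3) *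
          ((R - r) / R) ^ (Real.log (1 + Cv⁻¹ ^ (4 : ℕ)) / Real.log 3)) *
        μ (ball z R) := by
  have hCv0 : (0:ℝ) < Cv := lt_of_lt_of_le one_pos hCv
  set c := Cv⁻¹ ^ (4:ℕ) with hc
  have hc0 : 0 < c := by positivity
  have hc1 : c ≤ 1 := by
    rw [hc]
    exact pow_le_one₀ (by positivity) (inv_le_one_of_one_le₀ hCv)
  set γ := Real.log (1 + c) / Real.log 3 with hγ
  have hlog3 : (0:ℝ) < Real.log 3 := Real.log_pos (by norm_num)
  have hγ0 : 0 ≤ γ := div_nonneg (Real.log_nonneg (by linarith)) hlog3.le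
  have hR0 : (0:ℝ) < R := lt_of_le_of_lt hr hrR
  have hδ : (0:ℝ) < R - r := by linarith
  have hδR : (0:ℝ) < (R - r)/R := by positivity
  have hKpos : (0:ℝ) < (6:ℝ)^γ * ((R - r)/R)^γ :=
    mul_pos (Real.rpow_pos_of_pos (by norm_num) _) (Real.rpow_pos_of_pos hδR _)
  have hK6 : (6:ℝ)^γ * ((R - r)/R)^γ = (6 * ((R - r)/R))^γ :=
    (Real.mul_rpow (by norm_num) hδR.le).symm
  rcases eq_or_ne (μ (ball z R)) ⊤ with hinf | hfin
  · rw [hinf, ENNReal.mul_top (by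
      simp only [ne_eq, ENNReal.ofReal_eq_zero, not_le]
      exact hKpos)]
    exact le_top
  by_cases hsmall : R ≤ 2 * (R - r)
  · -- trivial case: coefficient ≥ 1
    have h6 : (1:ℝ) ≤ 6 * ((R - r)/R) := by
      rw [mul_div_assoc'] at *
      rw [le_div_iff₀ hR0]
      linarith
    have h1K : (1:ℝ) ≤ (6:ℝ)^γ * ((R - r)/R)^γ := by
      rw [hK6]
      calc (1:ℝ) = 1 ^ γ := (Real.one_rpow γ).symm
        _ ≤ (6 * ((R - r)/R))^γ := Real.rpow_le_rpow (by norm_num) h6 hγ0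
    calc μ (ball z R \ closure (ball z r)) ≤ μ (ball z R) := measure_mono diff_subset
      _ ≤ ENNReal.ofReal ((6:ℝ)^γ * ((R - r)/R)^γ) * μ (ball z R) :=
          le_mul_of_one_le_left (zero_le) (ENNReal.one_le_ofReal.mpr h1K)
  · push_neg at hsmall
    -- main case
    have hex : ∃ n : ℕ, R/(2*(R-r)) < 3^n :=
      pow_unbounded_of_one_lt (R/(2*(R-r))) (by norm_num : (1:ℝ) < 3)
    set N := Nat.find hex with hNdef
    have hN : R/(2*(R-r)) < 3^N := Nat.find_spec hex
    have h2δ : (0:ℝ) < 2*(R-r) := by linarith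
    have hNpos : 0 < N := by
      rcases Nat.eq_zero_or_pos N with h | h
      · exfalso
        rw [h, pow_zero] at hN
        have : 1 < R/(2*(R-r)) := (one_lt_div h2δ).mpr hsmall
        linarith
      · exact h
    have hNpred : (3:ℝ)^(N-1) ≤ R/(2*(R-r)) :=
      le_of_not_gt (Nat.find_min hex (Nat.sub_lt hNpos one_pos))
    have hcond : ∀ j < N, 2*((3:ℝ)^j*(R-r)) ≤ R := by
      intro j hj
      have hj' : j ≤ N-1 := by omega
      have h1 : (3:ℝ)^j ≤ 3^(N-1) := pow_le_pow_right₀ (by norm_num : (1:ℝ) ≤ 3) hj'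
      have h2 : (3:ℝ)^(N-1) * (2*(R-r)) ≤ R := (le_div_iff₀ h2δ).mp hNpred
      nlinarith
    have hiter := annulus_iter hlen μ hCv hdoub z R (R-r) hδ hfin N hcond
    have hsub1 : ball z R \ closure (ball z r) ⊆ ball z R \ ball z (R - (R-r)) := by
      have hrr : R - (R - r) = r := by ring
      rw [hrr]
      exact diff_subset_diff_right subset_closure
    have hθN : μ (ball z R \ ball z (R - (R-r))) ≤
        ENNReal.ofReal (1+c)⁻¹ ^ N * μ (ball z R) :=
      hiter.trans (mul_le_mul_right (measure_mono diff_subset) _)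
    -- real-number estimate
    have h3γ : (3:ℝ)^γ = 1 + c := by
      rw [hγ, Real.rpow_def_of_pos (by norm_num : (0:ℝ) < 3), mul_comm,
        div_mul_cancel₀ _ hlog3.ne']
      exact Real.exp_log (by linarith)
    have hθ3 : ((1:ℝ)+c)⁻¹ = (3:ℝ)^(-γ) := by
      rw [Real.rpow_neg (by norm_num : (0:ℝ) ≤ 3), h3γ]
    have h3Npos : (0:ℝ) < (3:ℝ)^N := by positivity
    have hreal : ((1:ℝ)+c)⁻¹ ^ N ≤ (6:ℝ)^γ * ((R-r)/R)^γ := by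
      rw [hK6, hθ3]
      have e1 : ((3:ℝ)^(-γ))^N = (((3:ℝ)^N)⁻¹) ^ γ := by
        rw [← Real.rpow_natCast ((3:ℝ)^(-γ)) N, ← Real.rpow_mul (by norm_num : (0:ℝ) ≤ 3),
          show -γ * (N:ℝ) = (N:ℝ) * -γ by ring,
          Real.rpow_mul (by norm_num : (0:ℝ) ≤ 3), Real.rpow_natCast,
          Real.rpow_neg h3Npos.le, ← Real.inv_rpow h3Npos.le]
      rw [e1]
      apply Real.rpow_le_rpow (by positivity) ?_ hγ0
      have hinv : ((3:ℝ)^N)⁻¹ < (R/(2*(R-r)))⁻¹ := by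
        apply inv_strictAnti₀ (div_pos hR0 h2δ) hN
      rw [inv_div] at hinv
      have : 2*(R-r)/R ≤ 6*((R-r)/R) := by
        rw [mul_div_assoc]
        have : (0:ℝ) ≤ (R-r)/R := hδR.le
        linarith
      linarith
    calc μ (ball z R \ closure (ball z r))
        ≤ μ (ball z R \ ball z (R - (R-r))) := measure_mono hsub1
      _ ≤ ENNReal.ofReal (1+c)⁻¹ ^ N * μ (ball z R) := hθN
      _ ≤ ENNReal.ofReal ((6:ℝ)^γ * ((R-r)/R)^γ) * μ (ball z R) := by
          apply mul_le_mul_left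
          rw [← ENNReal.ofReal_pow (by positivity)]
          exact ENNReal.ofReal_le_ofReal hreal
end

section
/- Let (X,d) be a totally bounded metric space and u_n : X → ℝ a sequence of (not necessarily continuous) functions. Suppose there exist a nondecreasing function η : [0,∞) → [0,∞) with lim_{t→0+} η(t) = 0 and a sequence δ_n ≥ 0 with δ_n → 0, such that sup_{n,x} |u_n(x)| < ∞ and |u_n(x) − u_n(y)| ≤ η(d(x,y)) + δ_n for all x,y ∈ X and all n. Then there exists a subsequence u_{n_k} and a continuous function u : X → ℝ with |u(x) − u(y)| ≤ η(d(x,y)) for all x,y, such that sup_{x∈X} |u_{n_k}(x) − u(x)| → 0 as k → ∞. -/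
open Filter Metric Set

/-- Arzelà–Ascoli type theorem for possibly discontinuous functions on a
totally bounded metric space. -/
theorem arzela_ascoli_discontinuous
    {X : Type*} [MetricSpace X]
    (hX : TotallyBounded (Set.univ : Set X))
    (u : ℕ → X → ℝ) (η : ℝ → ℝ) (δ : ℕ → ℝ)
    (hη_mono : MonotoneOn η (Set.Ici 0))
    (hη_nonneg : ∀ t, 0 ≤ t → 0 ≤ η t)
    (hη0 : Tendsto η (nhdsWithin 0 (Set.Ioi 0)) (nhds 0))
    (hδ_nonneg : ∀ n, 0 ≤ δ n)
    (hδ0 : Tendsto δ atTop (nhds 0))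
    (hbdd : ∃ M : ℝ, ∀ n x, |u n x| ≤ M)
    (hreg : ∀ n, ∀ x y : X, |u n x - u n y| ≤ η (dist x y) + δ n) :
    ∃ φ : ℕ → ℕ, StrictMono φ ∧ ∃ v : X → ℝ, Continuous v ∧
      (∀ x y : X, |v x - v y| ≤ η (dist x y)) ∧
      TendstoUniformly (fun k => u (φ k)) v atTop := by
  -- small values of η
  have hsmall : ∀ ε : ℝ, 0 < ε → ∃ t : ℝ, 0 < t ∧ ∀ s, 0 ≤ s → s ≤ t → η s < ε := by
    intro ε hε
    rw [Metric.tendsto_nhdsWithin_nhds] at hη0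
    obtain ⟨t, ht, h⟩ := hη0 ε hε
    refine ⟨t / 2, by linarith, fun s hs hst => ?_⟩
    have h2 : η (t / 2) < ε := by
      have := h (x := t / 2) (by simp; linarith) (by rw [Real.dist_eq]; rw [abs_of_pos]; linarith; linarith)
      rw [Real.dist_eq, sub_zero] at this
      exact lt_of_le_of_lt (le_abs_self _) this
    exact lt_of_le_of_lt (hη_mono hs (by simp; linarith) hst) h2
  -- handle empty X
  rcases isEmpty_or_nonempty X with hE | hNE
  · refine ⟨id, strictMono_id, fun _ => 0, continuous_const, fun x => (IsEmpty.false x).elim,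
      ?_⟩
    rw [Metric.tendstoUniformly_iff]
    intro ε hε
    filter_upwards with n x
    exact (IsEmpty.false x).elim
  -- separability
  have hsep : TopologicalSpace.SeparableSpace X :=
    TopologicalSpace.isSeparable_univ_iff.mp hX.isSeparable
  obtain ⟨M, hM⟩ := hbdd
  set d : ℕ → X := TopologicalSpace.denseSeq X with hd
  have hdense : DenseRange d := TopologicalSpace.denseRange_denseSeq X
  -- diagonal extraction via compactness of the product
  have hcompact : IsCompact (Set.univ.pi fun _ : ℕ => Icc (-M) M) :=
    isCompact_univ_pi fun _ => isCompact_Icc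
  have hmem : ∀ n, (fun i => u n (d i)) ∈ Set.univ.pi fun _ : ℕ => Icc (-M) M := by
    intro n i _
    exact abs_le.mp (hM n (d i))
  obtain ⟨g, -, φ, hφ, hconv⟩ := hcompact.tendsto_subseq hmem
  have hconv' : ∀ i, Tendsto (fun k => u (φ k) (d i)) atTop (nhds (g i)) := by
    intro i
    have := (tendsto_pi_nhds.mp hconv) i
    exact this
  have hδφ : Tendsto (fun k => δ (φ k)) atTop (nhds 0) :=
    hδ0.comp (hφ.tendsto_atTop)
  -- uniform Cauchy property
  have key : ∀ ε : ℝ, 0 < ε → ∃ N, ∀ k ≥ N, ∀ l ≥ N, ∀ x, |u (φ k) x - u (φ l) x| < ε := by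
    intro ε hε
    obtain ⟨t, ht, hηt⟩ := hsmall (ε / 8) (by linarith)
    -- finite net of radius t/2
    obtain ⟨F, Ffin, hFcov⟩ := (totallyBounded_iff.mp hX) (t / 2) (by linarith)
    -- for each y ∈ F pick an index of a dense point within t/2
    have hI : ∀ y : X, ∃ i : ℕ, dist y (d i) < t / 2 :=
      fun y => Metric.denseRange_iff.mp hdense y (t / 2) (by linarith)
    choose I hI using fun y : F => hI y
    -- eventually Cauchy at each of the finitely many dense points
    have hev : ∀ᶠ k in atTop, (∀ y : F, |u (φ k) (d (I y)) - g (I y)| < ε / 8) ∧ δ (φ k) < ε / 8 := by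
      have h1 : ∀ᶠ k in atTop, ∀ y : F, |u (φ k) (d (I y)) - g (I y)| < ε / 8 := by
        haveI := Ffin.to_subtype
        rw [eventually_all]
        intro y
        have := (hconv' (I y)).eventually (eventually_abs_sub_lt (g (I y)) (show (0:ℝ) < ε/8 by linarith))
        simpa using this
      have h2 : ∀ᶠ k in atTop, δ (φ k) < ε / 8 := by
        have := hδφ.eventually (eventually_lt_nhds (show (0:ℝ) < ε/8 by linarith))
        simpa using this
      exact h1.and h2
    obtain ⟨N, hN⟩ := eventually_atTop.mp hev
    refine ⟨N, fun k hk l hl x => ?_⟩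
    obtain ⟨y, hyF, hyx⟩ : ∃ y ∈ F, x ∈ ball y (t / 2) := by
      have := hFcov (mem_univ x)
      simpa using this
    set i := I ⟨y, hyF⟩ with hi
    have hdi : dist x (d i) ≤ t := by
      have h1 : dist x (d i) ≤ dist x y + dist y (d i) := dist_triangle _ _ _
      have h2 : dist x y < t / 2 := by rwa [mem_ball] at hyx
      have h3 : dist y (d i) < t / 2 := hI ⟨y, hyF⟩
      linarith
    have hηdi : η (dist x (d i)) < ε / 8 := hηt _ dist_nonneg hdi
    obtain ⟨hNk, hδk⟩ := hN k hk
    obtain ⟨hNl, hδl⟩ := hN l hl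
    have hk1 : |u (φ k) x - u (φ k) (d i)| ≤ η (dist x (d i)) + δ (φ k) := hreg _ _ _
    have hl1 : |u (φ l) x - u (φ l) (d i)| ≤ η (dist x (d i)) + δ (φ l) := hreg _ _ _
    have hki : |u (φ k) (d i) - g i| < ε / 8 := hNk ⟨y, hyF⟩
    have hli : |u (φ l) (d i) - g i| < ε / 8 := hNl ⟨y, hyF⟩
    have : |u (φ k) x - u (φ l) x| ≤
        |u (φ k) x - u (φ k) (d i)| + |u (φ k) (d i) - g i| + |g i - u (φ l) (d i)|
          + |u (φ l) (d i) - u (φ l) x| := by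
      have := abs_sub_le (u (φ k) x) (u (φ k) (d i)) (u (φ l) x)
      have h4 := abs_sub_le (u (φ k) (d i)) (g i) (u (φ l) (d i))
      have h5 := abs_sub_le (g i) (u (φ l) (d i)) (u (φ l) x)
      calc |u (φ k) x - u (φ l) x| ≤ |u (φ k) x - u (φ k) (d i)| + |u (φ k) (d i) - u (φ l) x| :=
            abs_sub_le _ _ _
        _ ≤ |u (φ k) x - u (φ k) (d i)| + (|u (φ k) (d i) - g i| + |g i - u (φ l) x|) := by
            have := abs_sub_le (u (φ k) (d i)) (g i) (u (φ l) x); linarith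
        _ ≤ _ := by
            have := abs_sub_le (g i) (u (φ l) (d i)) (u (φ l) x); linarith
    rw [abs_sub_comm (g i)] at this
    rw [abs_sub_comm (u (φ l) (d i)) (u (φ l) x)] at this
    linarith
  -- pointwise limit exists
  have hCauchy : ∀ x : X, CauchySeq fun k => u (φ k) x := by
    intro x
    rw [Metric.cauchySeq_iff]
    intro ε hε
    obtain ⟨N, hN⟩ := key ε hε
    exact ⟨N, fun m hm n hn => by rw [Real.dist_eq]; exact hN m hm n hn x⟩
  choose v hv using fun x => cauchySeq_tendsto_of_complete (hCauchy x)
  -- uniform convergence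
  have huc : TendstoUniformly (fun k => u (φ k)) v atTop := by
    rw [Metric.tendstoUniformly_iff]
    intro ε hε
    obtain ⟨N, hN⟩ := key (ε / 2) (by linarith)
    rw [eventually_atTop]
    refine ⟨N, fun k hk x => ?_⟩
    have hle : |v x - u (φ k) x| ≤ ε / 2 := by
      have htend : Tendsto (fun l => |u (φ l) x - u (φ k) x|) atTop
          (nhds (|v x - u (φ k) x|)) := by
        exact ((hv x).sub tendsto_const_nhds).abs
      refine le_of_tendsto htend ?_
      filter_upwards [eventually_ge_atTop N] with l hl
      exact le_of_lt (hN l hl k hk x)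
    rw [Real.dist_eq]
    calc |v x - u (φ k) x| ≤ ε / 2 := hle
      _ < ε := by linarith
  -- η-regularity of the limit
  have hvreg : ∀ x y : X, |v x - v y| ≤ η (dist x y) := by
    intro x y
    have htend : Tendsto (fun k => |u (φ k) x - u (φ k) y|) atTop (nhds (|v x - v y|)) :=
      ((hv x).sub (hv y)).abs
    have htend2 : Tendsto (fun k => η (dist x y) + δ (φ k)) atTop (nhds (η (dist x y))) := by
      simpa using (tendsto_const_nhds (x := η (dist x y))).add hδφ
    exact le_of_tendsto_of_tendsto' htend htend2 fun k => hreg _ _ _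
  -- continuity of the limit
  have hvcont : Continuous v := by
    rw [Metric.continuous_iff]
    intro x ε hε
    obtain ⟨t, ht, hηt⟩ := hsmall ε hε
    refine ⟨t, ht, fun y hy => ?_⟩
    rw [Real.dist_eq]
    exact lt_of_le_of_lt (hvreg y x) (hηt _ dist_nonneg (le_of_lt hy))
  exact ⟨φ, hφ, v, hvcont, hvreg, huc⟩
end

section
/- Let Ψ : (0,∞) → (0,∞) be a continuous increasing bijection and define Φ(s) = sup_{r>0} (s/r − 1/Ψ(r)) for s ≥ 0. If there exist constants C₀ > 1 and 1 < β ≤ β′ with C₀^{-1}(R/r)^β ≤ Ψ(R)/Ψ(r) ≤ C₀(R/r)^{β′} for all 0 < r ≤ R, then Φ(s) < ∞ for all s ≥ 0, Φ is nondecreasing and convex, Φ(0) = 0, and for all s ≥ t > 0 one has t·Φ(s/t) ≥ c (s^{β′}/t)^{1/(β′−1)} for some constant c > 0 depending only on C₀, β, β′ and Ψ(1). -/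
open Set

/-- The Legendre-type transform `Φ(s) = sup_{r>0} (s/r − 1/Ψ(r))`. -/
noncomputable def legendrePhi (Ψ : ℝ → ℝ) (s : ℝ) : ℝ :=
  sSup {v : ℝ | ∃ r : ℝ, 0 < r ∧ v = s / r - 1 / Ψ r}

/-- Basic properties of the transform `Φ` of a scaling function `Ψ` with
two-sided power bounds: finiteness, monotonicity, convexity, `Φ(0)=0`, and
the lower bound `t Φ(s/t) ≥ c (s^{β'}/t)^{1/(β'−1)}` for `s ≥ t > 0`. -/
theorem legendrePhi_properties
    (Ψ : ℝ → ℝ)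
    (hΨ_pos : ∀ r : ℝ, 0 < r → 0 < Ψ r)
    (hΨ_cont : ContinuousOn Ψ (Set.Ioi 0))
    (hΨ_mono : StrictMonoOn Ψ (Set.Ioi 0))
    (hΨ_bij : Set.BijOn Ψ (Set.Ioi 0) (Set.Ioi 0))
    (C₀ β β' : ℝ) (hC₀ : 1 < C₀) (hβ : 1 < β) (hββ' : β ≤ β')
    (hscal : ∀ r R : ℝ, 0 < r → r ≤ R →
      C₀⁻¹ * (R / r) ^ β ≤ Ψ R / Ψ r ∧ Ψ R / Ψ r ≤ C₀ * (R / r) ^ β') :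
    (∀ s : ℝ, 0 ≤ s → BddAbove {v : ℝ | ∃ r : ℝ, 0 < r ∧ v = s / r - 1 / Ψ r}) ∧
    MonotoneOn (legendrePhi Ψ) (Set.Ici 0) ∧
    ConvexOn ℝ (Set.Ici 0) (legendrePhi Ψ) ∧
    legendrePhi Ψ 0 = 0 ∧
    ∃ c : ℝ, 0 < c ∧ ∀ s t : ℝ, 0 < t → t ≤ s →
      c * (s ^ β' / t) ^ (1 / (β' - 1)) ≤ t * legendrePhi Ψ (s / t) := by
  have hΨ1 : 0 < Ψ 1 := hΨ_pos 1 one_pos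
  have hC₀0 : (0:ℝ) < C₀ := by linarith
  have hβ'1 : 1 < β' := lt_of_lt_of_le hβ hββ'
  have hβ1 : (0:ℝ) < β - 1 := by linarith
  have hβ'0 : (0:ℝ) < β' - 1 := by linarith
  -- nonemptiness of the defining sets
  have hne : ∀ s : ℝ, ({v : ℝ | ∃ r : ℝ, 0 < r ∧ v = s / r - 1 / Ψ r}).Nonempty :=
    fun s => ⟨s / 1 - 1 / Ψ 1, 1, one_pos, rfl⟩
  -- upper bound on Ψ for small r
  have hΨub : ∀ r : ℝ, 0 < r → r ≤ 1 → Ψ r ≤ C₀ * Ψ 1 * r ^ β := by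
    intro r hr hr1
    have h := (hscal r 1 hr hr1).1
    have hrβ : 0 < r ^ β := Real.rpow_pos_of_pos hr β
    rw [le_div_iff₀ (hΨ_pos r hr)] at h
    have h1 : (1 / r) ^ β = (r ^ β)⁻¹ := by
      rw [one_div, ← Real.inv_rpow hr.le]
    rw [h1] at h
    calc Ψ r = C₀ * r ^ β * (C₀⁻¹ * (r ^ β)⁻¹ * Ψ r) := by field_simp
      _ ≤ C₀ * r ^ β * Ψ 1 := mul_le_mul_of_nonneg_left h (by positivity)
      _ = C₀ * Ψ 1 * r ^ β := by ring
  -- lower bound on Ψ below a threshold r₀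
  have hΨlb : ∀ r₀ r : ℝ, 0 < r → r ≤ r₀ → Ψ r₀ * r ^ β' / (C₀ * r₀ ^ β') ≤ Ψ r := by
    intro r₀ r hr hrr₀
    have hr₀ : 0 < r₀ := lt_of_lt_of_le hr hrr₀
    have h := (hscal r r₀ hr hrr₀).2
    rw [div_le_iff₀ (hΨ_pos r hr), Real.div_rpow hr₀.le hr.le] at h
    rw [div_le_iff₀ (by positivity)]
    calc Ψ r₀ * r ^ β' ≤ (C₀ * (r₀ ^ β' / r ^ β') * Ψ r) * r ^ β' :=
          mul_le_mul_of_nonneg_right h (by positivity)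
      _ = Ψ r * (C₀ * r₀ ^ β') := by
          have : r ^ β' ≠ 0 := (Real.rpow_pos_of_pos hr β').ne'
          field_simp
  -- boundedness
  have hbdd : ∀ s : ℝ, 0 ≤ s →
      BddAbove {v : ℝ | ∃ r : ℝ, 0 < r ∧ v = s / r - 1 / Ψ r} := by
    intro s hs
    refine ⟨s * max 1 ((s * C₀ * Ψ 1) ^ (1 / (β - 1))), ?_⟩
    rintro v ⟨r, hr, rfl⟩
    have hK1 : (1:ℝ) ≤ max 1 ((s * C₀ * Ψ 1) ^ (1 / (β - 1))) := le_max_left _ _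
    have hΨr := hΨ_pos r hr
    rcases le_or_gt 1 r with h1r | h1r
    · -- r ≥ 1
      have : s / r ≤ s := div_le_self hs h1r
      have h2 : s ≤ s * max 1 ((s * C₀ * Ψ 1) ^ (1 / (β - 1))) :=
        le_mul_of_one_le_right hs hK1
      have h3 : (0:ℝ) < 1 / Ψ r := by positivity
      linarith
    · -- r < 1
      rcases eq_or_lt_of_le hs with rfl | hs0
      · have h3 : (0:ℝ) < 1 / Ψ r := by positivity
        simp only [zero_div, zero_mul]
        linarith
      · set D := s * C₀ * Ψ 1 with hD
        have hD0 : 0 < D := by positivity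
        rcases le_or_gt (r ^ (β - 1) * D) 1 with hcase | hcase
        · -- value is nonpositive
          have hub := hΨub r hr h1r.le
          have h4 : s / r ≤ 1 / Ψ r := by
            have h5 : 1 / (C₀ * Ψ 1 * r ^ β) ≤ 1 / Ψ r :=
              one_div_le_one_div_of_le hΨr hub
            refine le_trans ?_ h5
            rw [div_le_div_iff₀ hr (by positivity), one_mul]
            have hrβ : r ^ β = r ^ (β - 1) * r := by
              have h6 := Real.rpow_add hr (β - 1) 1
              rw [sub_add_cancel, Real.rpow_one] at h6
              exact h6
            calc s * (C₀ * Ψ 1 * r ^ β) = (r ^ (β - 1) * D) * r := by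
                  rw [hrβ, hD]; ring
              _ ≤ 1 * r := mul_le_mul_of_nonneg_right hcase hr.le
              _ = r := one_mul r
          have : s / r - 1 / Ψ r ≤ 0 := by linarith
          nlinarith [mul_nonneg hs (le_trans zero_le_one hK1)]
        · -- big r⁻¹ case -- 1/r is controlled
          have hrD : (1/D) < r ^ (β - 1) := by
            rw [div_lt_iff₀ hD0]
            linarith [hcase]
          have h7 : (1/D) ^ (1 / (β - 1)) < (r ^ (β - 1)) ^ (1 / (β - 1)) :=
            Real.rpow_lt_rpow (by positivity) hrD (by positivity)
          have h8 : (r ^ (β - 1)) ^ (1 / (β - 1)) = r := by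
            rw [← Real.rpow_mul hr.le, mul_one_div_cancel hβ1.ne', Real.rpow_one]
          have h9 : (1/D) ^ (1 / (β - 1)) = 1 / D ^ (1 / (β - 1)) := by
            simp [one_div, Real.inv_rpow hD0.le]
          rw [h8, h9] at h7
          have hD1 : 0 < D ^ (1 / (β - 1)) := Real.rpow_pos_of_pos hD0 _
          have h10 : 1 / r < D ^ (1 / (β - 1)) := by
            rw [div_lt_iff₀ hr]
            rw [div_lt_iff₀ hD1] at h7
            linarith [h7]
          have h11 : s / r ≤ s * max 1 (D ^ (1 / (β - 1))) := by
            rw [div_eq_mul_one_div]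
            exact mul_le_mul_of_nonneg_left
              (le_trans h10.le (le_max_right _ _)) hs
          have h12 : (0:ℝ) < 1 / Ψ r := by positivity
          linarith
  -- monotonicity
  have hmono : MonotoneOn (legendrePhi Ψ) (Set.Ici 0) := by
    intro x hx y hy hxy
    apply csSup_le (hne x)
    rintro v ⟨r, hr, rfl⟩
    have h1 : x / r - 1 / Ψ r ≤ y / r - 1 / Ψ r := by gcongr
    exact le_trans h1 (le_csSup (hbdd y hy) ⟨r, hr, rfl⟩)
  -- convexity
  have hconv : ConvexOn ℝ (Set.Ici 0) (legendrePhi Ψ) := by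
    refine ⟨convex_Ici 0, ?_⟩
    intro x hx y hy a b ha hb hab
    simp only [smul_eq_mul]
    apply csSup_le (hne _)
    rintro v ⟨r, hr, rfl⟩
    have e : (a * x + b * y) / r - 1 / Ψ r
        = a * (x / r - 1 / Ψ r) + b * (y / r - 1 / Ψ r) := by
      linear_combination (1 / Ψ r) * hab
    rw [e]
    have h1 : x / r - 1 / Ψ r ≤ legendrePhi Ψ x := le_csSup (hbdd x hx) ⟨r, hr, rfl⟩
    have h2 : y / r - 1 / Ψ r ≤ legendrePhi Ψ y := le_csSup (hbdd y hy) ⟨r, hr, rfl⟩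
    exact add_le_add (mul_le_mul_of_nonneg_left h1 ha) (mul_le_mul_of_nonneg_left h2 hb)
  -- value at zero
  have hzero : legendrePhi Ψ 0 = 0 := by
    apply le_antisymm
    · apply csSup_le (hne 0)
      rintro v ⟨r, hr, rfl⟩
      have h1 : (0:ℝ) < 1 / Ψ r := one_div_pos.mpr (hΨ_pos r hr)
      rw [zero_div]
      linarith
    · apply le_of_forall_pos_le_add
      intro ε hε
      obtain ⟨r, hr, hΨr⟩ := hΨ_bij.surjOn (show (2/ε) ∈ Set.Ioi (0:ℝ) from by
        simp only [Set.mem_Ioi]; exact div_pos two_pos hε)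
      have hr' : (0:ℝ) < r := hr
      have key : (0:ℝ) / r - 1 / Ψ r ≤ legendrePhi Ψ 0 :=
        le_csSup (hbdd 0 le_rfl) ⟨r, hr', rfl⟩
      rw [zero_div, hΨr, one_div_div] at key
      linarith
  refine ⟨hbdd, hmono, hconv, hzero, ?_⟩
  -- the lower bound
  set r₀ : ℝ := max 1 ((2 * C₀ ^ 2 / Ψ 1) ^ (1 / (β - 1))) with hr₀def
  have hr₀1 : (1:ℝ) ≤ r₀ := le_max_left _ _
  have hr₀ : (0:ℝ) < r₀ := lt_of_lt_of_le one_pos hr₀1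
  set δ : ℝ := (2 * C₀ ^ 2 * r₀ ^ (β' - β) / Ψ 1) ^ (1 / (β' - 1)) with hδdef
  have hδ : 0 < δ := Real.rpow_pos_of_pos (by positivity) _
  have hδpow : δ ^ (β' - 1) = 2 * C₀ ^ 2 * r₀ ^ (β' - β) / Ψ 1 := by
    rw [hδdef, ← Real.rpow_mul (by positivity), one_div_mul_cancel hβ'0.ne',
      Real.rpow_one]
  have hΨr₀pos : 0 < Ψ r₀ := hΨ_pos r₀ hr₀
  have hΨr₀ : C₀⁻¹ * r₀ ^ β * Ψ 1 ≤ Ψ r₀ := by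
    have h := (hscal 1 r₀ one_pos hr₀1).1
    rw [div_one] at h
    exact (le_div_iff₀ hΨ1).mp h
  have hA : C₀ * r₀ ^ β' / Ψ r₀ ≤ δ ^ (β' - 1) / 2 := by
    have h2 : C₀ * r₀ ^ β' / Ψ r₀ ≤ C₀ * r₀ ^ β' / (C₀⁻¹ * r₀ ^ β * Ψ 1) := by
      gcongr
    have h3 : C₀ * r₀ ^ β' / (C₀⁻¹ * r₀ ^ β * Ψ 1) = δ ^ (β' - 1) / 2 := by
      rw [hδpow, Real.rpow_sub hr₀]
      have hb : (0:ℝ) < r₀ ^ β := Real.rpow_pos_of_pos hr₀ β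
      field_simp
    linarith
  have hδr₀ : δ ≤ r₀ := by
    have h1 : 2 * C₀ ^ 2 / Ψ 1 ≤ r₀ ^ (β - 1) := by
      have h2 : (2 * C₀ ^ 2 / Ψ 1) ^ (1 / (β - 1)) ≤ r₀ := le_max_right _ _
      have h3 := Real.rpow_le_rpow (by positivity) h2 (le_of_lt hβ1)
      rwa [← Real.rpow_mul (by positivity), one_div_mul_cancel hβ1.ne',
        Real.rpow_one] at h3
    have h4 : δ ^ (β' - 1) ≤ r₀ ^ (β' - 1) := by
      rw [hδpow]
      calc 2 * C₀ ^ 2 * r₀ ^ (β' - β) / Ψ 1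
          = (2 * C₀ ^ 2 / Ψ 1) * r₀ ^ (β' - β) := by ring
        _ ≤ r₀ ^ (β - 1) * r₀ ^ (β' - β) :=
            mul_le_mul_of_nonneg_right h1 (by positivity)
        _ = r₀ ^ (β' - 1) := by
            rw [← Real.rpow_add hr₀]
            congr 1
            ring
    have h5 := Real.rpow_le_rpow (by positivity) h4
      (by positivity : (0:ℝ) ≤ 1 / (β' - 1))
    rwa [← Real.rpow_mul hδ.le, ← Real.rpow_mul hr₀.le,
      mul_one_div_cancel hβ'0.ne', Real.rpow_one, Real.rpow_one] at h5
  refine ⟨1 / (2 * δ), by positivity, ?_⟩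
  intro s t ht hts
  have hs : 0 < s := lt_of_lt_of_le ht hts
  set u := s / t with hu
  have hu1 : (1:ℝ) ≤ u := (one_le_div ht).mpr hts
  have hu0 : (0:ℝ) < u := lt_of_lt_of_le one_pos hu1
  set w := u ^ (1 / (β' - 1)) with hw
  have hw1 : (1:ℝ) ≤ w := Real.one_le_rpow hu1 (by positivity)
  have hw0 : (0:ℝ) < w := lt_of_lt_of_le one_pos hw1
  set r := δ / w with hrdef
  have hr : 0 < r := by positivity
  have hrr₀ : r ≤ r₀ := le_trans (div_le_self hδ.le hw1) hδr₀
  have hΨr := hΨ_pos r hr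
  have h1 : 1 / Ψ r ≤ C₀ * r₀ ^ β' / Ψ r₀ / r ^ β' := by
    have h2 := hΨlb r₀ r hr hrr₀
    have h3 : 0 < Ψ r₀ * r ^ β' / (C₀ * r₀ ^ β') := by positivity
    have h4 := one_div_le_one_div_of_le h3 h2
    have hrb : (0:ℝ) < r ^ β' := Real.rpow_pos_of_pos hr β'
    have hr₀b : (0:ℝ) < r₀ ^ β' := Real.rpow_pos_of_pos hr₀ β'
    calc 1 / Ψ r ≤ 1 / (Ψ r₀ * r ^ β' / (C₀ * r₀ ^ β')) := h4
      _ = C₀ * r₀ ^ β' / Ψ r₀ / r ^ β' := by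
          field_simp
  have h5 : 1 / Ψ r ≤ δ ^ (β' - 1) / 2 / r ^ β' := by
    refine le_trans h1 ?_
    gcongr
  have hΦ : u / r - 1 / Ψ r ≤ legendrePhi Ψ u :=
    le_csSup (hbdd u hu0.le) ⟨r, hr, rfl⟩
  have hwβ' : w ^ β' = u * w := by
    have he : 1 / (β' - 1) * β' = 1 + 1 / (β' - 1) := by
      field_simp
      ring
    rw [hw, ← Real.rpow_mul hu0.le, he, Real.rpow_add hu0, Real.rpow_one]
  have hδβ' : δ ^ β' = δ ^ (β' - 1) * δ := by
    have h6 := Real.rpow_add hδ (β' - 1) 1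
    rw [sub_add_cancel, Real.rpow_one] at h6
    exact h6
  have hval : u / r - δ ^ (β' - 1) / 2 / r ^ β' = u * w / (2 * δ) := by
    rw [hrdef, Real.div_rpow hδ.le hw0.le, hδβ', hwβ']
    have hδ1 : (0:ℝ) < δ ^ (β' - 1) := Real.rpow_pos_of_pos hδ _
    field_simp
    ring
  have hΦ2 : u * w / (2 * δ) ≤ legendrePhi Ψ u := by
    have h7 := sub_le_sub_left h5 (u / r)
    linarith
  have hst : u * t = s := div_mul_cancel₀ s ht.ne'
  have hRHS : (s ^ β' / t) ^ (1 / (β' - 1)) = u * w * t := by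
    rw [← hst, Real.mul_rpow hu0.le ht.le]
    have h6 : u ^ β' * t ^ β' / t = u ^ β' * t ^ (β' - 1) := by
      rw [Real.rpow_sub ht, Real.rpow_one]
      ring
    rw [h6, Real.mul_rpow (Real.rpow_pos_of_pos hu0 β').le
      (Real.rpow_pos_of_pos ht (β' - 1)).le,
      ← Real.rpow_mul ht.le, mul_one_div_cancel hβ'0.ne', Real.rpow_one,
      ← Real.rpow_mul hu0.le]
    have he : β' * (1 / (β' - 1)) = 1 + 1 / (β' - 1) := by
      field_simp
      ring
    rw [he, Real.rpow_add hu0, Real.rpow_one]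
  rw [hRHS]
  calc 1 / (2 * δ) * (u * w * t) = t * (u * w / (2 * δ)) := by ring
    _ ≤ t * legendrePhi Ψ u := mul_le_mul_of_nonneg_left hΦ2 ht.le
end

section
/- Let Ψ_n : (0,∞) → (0,∞), 1 ≤ n ≤ ∞, be continuous increasing bijections satisfying C₀^{-1}(R/r)^β ≤ Ψ_n(R)/Ψ_n(r) ≤ C₀(R/r)^{β′} for all 0 < r ≤ R, with constants C₀ > 1 and 1 < β ≤ β′ independent of n. Suppose Ψ_n → Ψ_∞ uniformly on compact subsets of [0,∞). Define Φ_n(s) = sup_{r>0}(s/r − 1/Ψ_n(r)). Then Φ_n → Φ_∞ uniformly on compact subsets of [0,∞). -/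
open Set Filter

/-- If `Ψ` is small near `0`, every element of the defining set is at most `M/a`. -/
lemma phi_mem_le {Ψ : ℝ → ℝ} {a M s : ℝ}
    (hpos : ∀ r : ℝ, 0 < r → 0 < Ψ r)
    (ha : 0 < a) (hM : 0 < M)
    (hsmall : ∀ r : ℝ, 0 < r → r ≤ a → Ψ r ≤ r / (2*M))
    (hsM : s ≤ M) :
    ∀ v ∈ {v : ℝ | ∃ r : ℝ, 0 < r ∧ v = s / r - 1 / Ψ r}, v ≤ M / a := by
  rintro v ⟨r, hr, rfl⟩
  have hΨ := hpos r hr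
  have hsr : s / r ≤ M / r := by gcongr
  rcases le_or_gt r a with hra | hra
  · have hΨa := hsmall r hr hra
    have h2 : 2*M/r ≤ 1 / Ψ r := by
      rw [div_le_div_iff₀ hr hΨ]
      have := (le_div_iff₀ (by positivity : (0:ℝ) < 2*M)).mp hΨa
      linarith
    have : M/r - 2*M/r ≤ M / a := by
      have he : M/r - 2*M/r = -(M/r) := by ring
      rw [he]
      have h3 : 0 < M / r := div_pos hM hr
      have h4 : 0 < M / a := div_pos hM ha
      linarith
    linarith
  · have h5 : 0 < 1 / Ψ r := by positivity
    have h6 : M / r ≤ M / a := div_le_div_of_nonneg_left hM.le ha hra.le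
    linarith

/-- From the lower scaling bound, `Ψ` is power-small near `0`. -/
lemma psi_small {Ψ : ℝ → ℝ} {C₀ β M K : ℝ} (hC₀ : 1 < C₀) (hβ : 1 < β)
    (hpos : ∀ r : ℝ, 0 < r → 0 < Ψ r)
    (hscal : ∀ r R : ℝ, 0 < r → r ≤ R → C₀⁻¹ * (R/r)^β ≤ Ψ R / Ψ r)
    (hM : 0 < M) (hK : 0 < K) (hΨ1 : Ψ 1 ≤ K) :
    ∀ r : ℝ, 0 < r → r ≤ min 1 ((2*M*C₀*K) ^ (-(β-1)⁻¹)) → Ψ r ≤ r / (2*M) := by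
  intro r hr hra
  have hC₀0 : (0:ℝ) < C₀ := by linarith
  have hT : (0:ℝ) < 2*M*C₀*K := by positivity
  have hr1 : r ≤ 1 := le_trans hra (min_le_left _ _)
  have hΨr := hpos r hr
  have hΨ1p := hpos 1 one_pos
  have hrβ : (0:ℝ) < r ^ β := Real.rpow_pos_of_pos hr β
  have hsc := hscal r 1 hr hr1
  have hinv : (1/r : ℝ) ^ β = (r ^ β)⁻¹ := by
    rw [one_div, ← Real.inv_rpow hr.le]
  rw [hinv] at hsc
  have h1 : Ψ r ≤ C₀ * K * r ^ β := by
    have h2 : C₀⁻¹ * (r ^ β)⁻¹ * Ψ r ≤ Ψ 1 := by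
      rw [← le_div_iff₀ hΨr]
      exact hsc
    have h3 : Ψ r = (C₀ * r ^ β) * (C₀⁻¹ * (r ^ β)⁻¹ * Ψ r) := by
      field_simp
    rw [h3]
    calc (C₀ * r ^ β) * (C₀⁻¹ * (r ^ β)⁻¹ * Ψ r) ≤ (C₀ * r ^ β) * K := by
          apply mul_le_mul_of_nonneg_left (le_trans h2 hΨ1) (by positivity)
      _ = C₀ * K * r ^ β := by ring
  have h4 : r ^ (β - 1) ≤ (2*M*C₀*K)⁻¹ := by
    have h5 : r ^ (β - 1) ≤ ((2*M*C₀*K) ^ (-(β-1)⁻¹)) ^ (β - 1) :=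
      Real.rpow_le_rpow hr.le (le_trans hra (min_le_right _ _)) (by linarith)
    have h6 : ((2*M*C₀*K) ^ (-(β-1)⁻¹ : ℝ)) ^ (β - 1) = (2*M*C₀*K)⁻¹ := by
      rw [← Real.rpow_mul hT.le, show (-(β-1)⁻¹ * (β-1)) = -1 by
        have hβ1 : β - 1 ≠ 0 := by linarith
        field_simp, Real.rpow_neg_one]
    rw [h6] at h5
    exact h5
  have h7 : r ^ β = r * r ^ (β - 1) := by
    have h := Real.rpow_add hr 1 (β - 1)
    rw [Real.rpow_one] at h
    rw [show (1:ℝ) + (β - 1) = β by ring] at h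
    exact h
  calc Ψ r ≤ C₀ * K * r ^ β := h1
    _ = C₀ * K * r * r ^ (β - 1) := by rw [h7]; ring
    _ ≤ C₀ * K * r * (2*M*C₀*K)⁻¹ :=
        mul_le_mul_of_nonneg_left h4 (by positivity)
    _ = r / (2*M) := by field_simp

lemma phi_nonneg {Ψ : ℝ → ℝ} {s : ℝ}
    (hsurj : ∀ y : ℝ, 0 < y → ∃ r : ℝ, 0 < r ∧ Ψ r = y)
    (hbdd : BddAbove {v : ℝ | ∃ r : ℝ, 0 < r ∧ v = s / r - 1 / Ψ r})
    (hs : 0 ≤ s) : 0 ≤ legendrePhi Ψ s := by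
  refine le_of_forall_pos_le_add fun ε hε => ?_
  obtain ⟨r, hr, hΨr⟩ := hsurj (1/ε) (by positivity)
  have h1 : s / r - 1 / Ψ r ≤ legendrePhi Ψ s := le_csSup hbdd ⟨r, hr, rfl⟩
  rw [hΨr] at h1
  have h2 : (1:ℝ) / (1/ε) = ε := by field_simp
  rw [h2] at h1
  have h3 : 0 ≤ s / r := by positivity
  linarith

lemma phi_le_phi_add {Ψ Ψ' : ℝ → ℝ} {a b M s δ ε : ℝ}
    (hpos : ∀ r : ℝ, 0 < r → 0 < Ψ r)
    (hM : 0 < M)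
    (hsmall : ∀ r : ℝ, 0 < r → r ≤ a → Ψ r ≤ r / (2*M))
    (hbdd' : BddAbove {v : ℝ | ∃ r : ℝ, 0 < r ∧ v = s / r - 1 / Ψ' r})
    (hΦ'0 : 0 ≤ legendrePhi Ψ' s)
    (hδ : 0 ≤ δ) (hclose : ∀ r : ℝ, a ≤ r → r ≤ b → 1 / Ψ' r - 1 / Ψ r ≤ δ)
    (hb : 0 < b) (hεb : M / b ≤ ε) (hε : 0 ≤ ε)
    (hsM : s ≤ M) :
    legendrePhi Ψ s ≤ legendrePhi Ψ' s + δ + ε := by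
  rw [legendrePhi]
  refine csSup_le ⟨s / 1 - 1 / Ψ 1, 1, one_pos, rfl⟩ ?_
  rintro v ⟨r, hr, rfl⟩
  have hΨr := hpos r hr
  rcases le_or_gt r a with hra | hra
  · have hΨa := hsmall r hr hra
    have h2 : 2*M/r ≤ 1 / Ψ r := by
      rw [div_le_div_iff₀ hr hΨr]
      have := (le_div_iff₀ (by positivity : (0:ℝ) < 2*M)).mp hΨa
      linarith
    have hsr : s / r ≤ M / r := by gcongr
    have h3 : 0 < M / r := div_pos hM hr
    have hv : s / r - 1 / Ψ r ≤ M / r - 2*M/r := by linarith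
    have he : M / r - 2*M/r = -(M/r) := by ring
    linarith
  rcases le_or_gt r b with hrb | hrb
  · have h4 : s / r - 1 / Ψ' r ≤ legendrePhi Ψ' s := le_csSup hbdd' ⟨r, hr, rfl⟩
    have h5 := hclose r hra.le hrb
    linarith
  · have h6 : s / r ≤ M / b := by
      calc s / r ≤ M / r := by gcongr
        _ ≤ M / b := by gcongr
    have h7 : 0 < 1 / Ψ r := by positivity
    linarith

lemma one_div_sub_one_div_le {x y c e : ℝ} (hc : 0 < c) (hx : c ≤ x) (hy : c ≤ y)
    (hxy : y - x ≤ e * c^2) (he : 0 ≤ e) : 1/x - 1/y ≤ e := by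
  have hx0 : 0 < x := lt_of_lt_of_le hc hx
  have hy0 : 0 < y := lt_of_lt_of_le hc hy
  rw [div_sub_div _ _ hx0.ne' hy0.ne', div_le_iff₀ (by positivity)]
  nlinarith [mul_le_mul hx hy hc.le hx0.le]

/-- If scaling functions `Ψ_n` satisfy uniform two-sided power bounds and
converge to `Ψ_∞` uniformly on compacts, then the associated transforms
`Φ_n` converge to `Φ_∞` uniformly on compact subsets of `[0,∞)`. -/
theorem legendrePhi_tendstoUniformlyOn
    (Ψ : ℕ → ℝ → ℝ) (Ψinf : ℝ → ℝ)
    (C₀ β β' : ℝ) (hC₀ : 1 < C₀) (hβ : 1 < β) (hββ' : β ≤ β')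
    (hpos : ∀ n, ∀ r : ℝ, 0 < r → 0 < Ψ n r)
    (hpos_inf : ∀ r : ℝ, 0 < r → 0 < Ψinf r)
    (hcont : ∀ n, ContinuousOn (Ψ n) (Set.Ioi 0))
    (hcont_inf : ContinuousOn Ψinf (Set.Ioi 0))
    (hmono : ∀ n, StrictMonoOn (Ψ n) (Set.Ioi 0))
    (hmono_inf : StrictMonoOn Ψinf (Set.Ioi 0))
    (hbij : ∀ n, Set.BijOn (Ψ n) (Set.Ioi 0) (Set.Ioi 0))
    (hbij_inf : Set.BijOn Ψinf (Set.Ioi 0) (Set.Ioi 0))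
    (hscal : ∀ n, ∀ r R : ℝ, 0 < r → r ≤ R →
      C₀⁻¹ * (R / r) ^ β ≤ Ψ n R / Ψ n r ∧ Ψ n R / Ψ n r ≤ C₀ * (R / r) ^ β')
    (hscal_inf : ∀ r R : ℝ, 0 < r → r ≤ R →
      C₀⁻¹ * (R / r) ^ β ≤ Ψinf R / Ψinf r ∧ Ψinf R / Ψinf r ≤ C₀ * (R / r) ^ β')
    (hconv : ∀ M : ℝ, 0 < M →
      TendstoUniformlyOn (fun n => Ψ n) Ψinf atTop (Set.Icc 0 M)) :
    ∀ M : ℝ, 0 < M →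
      TendstoUniformlyOn (fun n => legendrePhi (Ψ n)) (legendrePhi Ψinf)
        atTop (Set.Icc 0 M) := by
  intro M hM
  rw [Metric.tendstoUniformlyOn_iff]
  intro ε hε
  have hC₀0 : (0:ℝ) < C₀ := by linarith
  have hΨinf1 : 0 < Ψinf 1 := hpos_inf 1 one_pos
  set K := Ψinf 1 + 1 with hKdef
  have hK : 0 < K := by rw [hKdef]; linarith
  set a := min 1 ((2*M*C₀*K) ^ (-(β-1)⁻¹ : ℝ)) with hadef
  have hT : (0:ℝ) < 2*M*C₀*K := by positivity
  have ha : 0 < a := lt_min one_pos (Real.rpow_pos_of_pos hT _)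
  set b := max a (4*M/ε) with hbdef
  have hb : 0 < b := lt_of_lt_of_le ha (le_max_left _ _)
  have hMb : M / b ≤ ε/4 := by
    calc M / b ≤ M / (4*M/ε) :=
          div_le_div_of_nonneg_left hM.le (by positivity) (le_max_right _ _)
      _ = ε/4 := by field_simp
  set L := max 1 b with hLdef
  have hL : (0:ℝ) < L := lt_of_lt_of_le one_pos (le_max_left _ _)
  have hm : 0 < Ψinf a := hpos_inf a ha
  set m := Ψinf a with hmdef
  set η := min 1 (min (m/2) ((ε/4) * (m/2)^2)) with hηdef
  have hη : 0 < η := lt_min one_pos (lt_min (by positivity) (by positivity))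
  have hconvL := hconv L hL
  rw [Metric.tendstoUniformlyOn_iff] at hconvL
  filter_upwards [hconvL η hη] with n hn
  intro s hs
  obtain ⟨hs0, hsM⟩ := hs
  -- `Ψ n 1 ≤ K`
  have h1L : (1:ℝ) ∈ Icc (0:ℝ) L := ⟨zero_le_one, le_max_left _ _⟩
  have hd1 := hn 1 h1L
  rw [Real.dist_eq] at hd1
  have hΨn1 : Ψ n 1 ≤ K := by
    have h := abs_lt.mp hd1
    have hη1 : η ≤ 1 := min_le_left _ _
    rw [hKdef]
    linarith [h.1, h.2]
  -- smallness of both functions on `(0,a]`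
  have hsmall_n := psi_small hC₀ hβ (hpos n)
    (fun r R hr hrR => (hscal n r R hr hrR).1) hM hK hΨn1
  have hsmall_inf := psi_small hC₀ hβ hpos_inf
    (fun r R hr hrR => (hscal_inf r R hr hrR).1) hM hK (by rw [hKdef]; linarith)
  -- boundedness
  have hbdd_n : BddAbove {v : ℝ | ∃ r : ℝ, 0 < r ∧ v = s / r - 1 / Ψ n r} :=
    ⟨M/a, phi_mem_le (hpos n) ha hM hsmall_n hsM⟩
  have hbdd_inf : BddAbove {v : ℝ | ∃ r : ℝ, 0 < r ∧ v = s / r - 1 / Ψinf r} :=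
    ⟨M/a, phi_mem_le hpos_inf ha hM hsmall_inf hsM⟩
  -- nonnegativity
  have hsurj_n : ∀ y : ℝ, 0 < y → ∃ r : ℝ, 0 < r ∧ Ψ n r = y := fun y hy => by
    obtain ⟨r, hr, hry⟩ := (hbij n).surjOn (Set.mem_Ioi.mpr hy)
    exact ⟨r, hr, hry⟩
  have hsurj_inf : ∀ y : ℝ, 0 < y → ∃ r : ℝ, 0 < r ∧ Ψinf r = y := fun y hy => by
    obtain ⟨r, hr, hry⟩ := hbij_inf.surjOn (Set.mem_Ioi.mpr hy)
    exact ⟨r, hr, hry⟩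
  have hΦn0 := phi_nonneg hsurj_n hbdd_n hs0
  have hΦinf0 := phi_nonneg hsurj_inf hbdd_inf hs0
  -- closeness of `1/Ψ` on `[a, b]`
  have hclose : ∀ r : ℝ, a ≤ r → r ≤ b →
      (1 / Ψinf r - 1 / Ψ n r ≤ ε/4 ∧ 1 / Ψ n r - 1 / Ψinf r ≤ ε/4) := by
    intro r har hrb
    have hr : 0 < r := lt_of_lt_of_le ha har
    have hrL : r ∈ Icc (0:ℝ) L := ⟨hr.le, le_trans hrb (le_max_right _ _)⟩
    have hd := hn r hrL
    rw [Real.dist_eq] at hd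
    have hdd := abs_lt.mp hd
    have hΨinfr : m ≤ Ψinf r :=
      hmono_inf.monotoneOn (Set.mem_Ioi.mpr ha) (Set.mem_Ioi.mpr hr) har
    have hηm : η ≤ m/2 := le_trans (min_le_right _ _) (min_le_left _ _)
    have hηe : η ≤ (ε/4) * (m/2)^2 := le_trans (min_le_right _ _) (min_le_right _ _)
    have hΨnr : m/2 ≤ Ψ n r := by linarith [hdd.1, hdd.2]
    have hΨinfr2 : m/2 ≤ Ψinf r := by linarith
    constructor
    · exact one_div_sub_one_div_le (by positivity) hΨinfr2 hΨnr
        (by linarith [hdd.1, hdd.2]) (by positivity)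
    · exact one_div_sub_one_div_le (by positivity) hΨnr hΨinfr2
        (by linarith [hdd.1, hdd.2]) (by positivity)
  have hcomp1 : legendrePhi (Ψ n) s ≤ legendrePhi Ψinf s + ε/4 + ε/4 :=
    phi_le_phi_add (hpos n) hM hsmall_n hbdd_inf hΦinf0 (by positivity)
      (fun r har hrb => (hclose r har hrb).1) hb hMb (by positivity) hsM
  have hcomp2 : legendrePhi Ψinf s ≤ legendrePhi (Ψ n) s + ε/4 + ε/4 :=
    phi_le_phi_add hpos_inf hM hsmall_inf hbdd_n hΦn0 (by positivity)
      (fun r har hrb => (hclose r har hrb).2) hb hMb (by positivity) hsM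
  rw [Real.dist_eq, abs_lt]
  constructor <;> linarith
end

section
/- Let (X_n, d_n, p_n), 1 ≤ n < ∞, be pointed proper length metric spaces converging to a complete pointed metric space (X_∞, d_∞, p_∞) in the pointed Gromov–Hausdorff topology. Then diam(X_n, d_n) → diam(X_∞, d_∞) (where the diameters may be infinite and the convergence is in [0,∞]). -/
open Metric Filter Set

lemma exists_dist_btwn {Z : Type*} [MetricSpace Z] (hlen : IsLengthSpace Z)
    (p x : Z) {s δ : ℝ} (hs0 : 0 ≤ s) (hs : s ≤ dist p x) (hδ : 0 < δ) :
    ∃ z : Z, s ≤ dist p z ∧ dist p z ≤ s + δ := by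
  set δ' := δ / 3 with hδ'def
  have hδ' : 0 < δ' := by positivity
  have key : ∀ n : ℕ, ∃ a b : Z, dist p a ≤ s ∧ s ≤ dist p b ∧
      dist a b ≤ dist p x / 2 ^ n + 2 * δ' := by
    intro n
    induction n with
    | zero =>
      refine ⟨p, x, by simpa using hs0, hs, ?_⟩
      simp only [pow_zero, div_one]
      linarith
    | succ n ih =>
      obtain ⟨a, b, ha, hb, hab⟩ := ih
      obtain ⟨m, hm1, hm2⟩ := hlen a b δ' hδ'
      have h2 : dist p x / 2 ^ (n + 1) = (dist p x / 2 ^ n) / 2 := by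
        rw [pow_succ]; ring
      by_cases h : s ≤ dist p m
      · exact ⟨a, m, ha, h, by rw [h2]; linarith⟩
      · exact ⟨m, b, le_of_not_ge h, hb, by rw [h2]; linarith⟩
  have hn : ∃ n : ℕ, dist p x / 2 ^ n < δ' := by
    obtain ⟨n, hn⟩ := exists_pow_lt_of_lt_one
      (show (0:ℝ) < δ' / (dist p x + 1) by positivity)
      (show (1:ℝ)/2 < 1 by norm_num)
    refine ⟨n, ?_⟩
    have hpx : (0:ℝ) ≤ dist p x := dist_nonneg
    have h2n : (0:ℝ) < 2 ^ n := by positivity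
    have : ((1:ℝ)/2) ^ n = 1 / 2 ^ n := by
      rw [div_pow, one_pow]
    rw [this] at hn
    rw [div_lt_iff₀ h2n] at hn ⊢
    have := mul_pos (show (0:ℝ) < dist p x + 1 by linarith) h2n
    calc dist p x ≤ dist p x + 1 := by linarith
      _ = (dist p x + 1) * 1 := by ring
      _ < (dist p x + 1) * ((δ' / (dist p x + 1)) * 2 ^ n) := by
          nlinarith
      _ = δ' * 2 ^ n := by field_simp
  obtain ⟨n, hn⟩ := hn
  obtain ⟨a, b, ha, hb, hab⟩ := key n
  refine ⟨b, hb, ?_⟩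
  have := dist_triangle p a b
  linarith [hδ'def ▸ (show 3 * δ' = δ by rw [hδ'def]; ring)]

/-- Convergence of diameters under pointed Gromov–Hausdorff convergence of
proper length spaces to a complete limit space.  The diameters take values
in `[0,∞]` and the convergence is in `ℝ≥0∞`. -/
theorem diam_tendsto_of_pointedGH
    {X : ℕ → Type*} [∀ n, MetricSpace (X n)] [∀ n, ProperSpace (X n)]
    (hlen : ∀ n, IsLengthSpace (X n)) (p : ∀ n, X n)
    {Y : Type*} [MetricSpace Y] [CompleteSpace Y] (pinf : Y)
    -- pointed Gromov–Hausdorff convergence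
    (hGH : ∀ r : ℝ, 0 < r → ∀ ε : ℝ, 0 < ε → ε < r → ∃ i₀ : ℕ, ∀ i ≥ i₀,
      ∃ f : X i → Y,
        f (p i) = pinf ∧
        (∀ x ∈ ball (p i) r, ∀ y ∈ ball (p i) r,
          |dist (f x) (f y) - dist x y| < ε) ∧
        ball pinf (r - ε) ⊆ thickening ε (f '' ball (p i) r)) :
    Tendsto (fun n => EMetric.diam (Set.univ : Set (X n))) atTop
      (nhds (EMetric.diam (Set.univ : Set Y))) := by
  rw [tendsto_order]
  constructor
  · -- lower bound: ∀ b < diam Y, eventually b < diam (X n)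
    intro b hb
    -- find two points of Y with edist > b
    have : ∃ y₁ y₂ : Y, b < edist y₁ y₂ := by
      by_contra h
      push_neg at h
      have : EMetric.diam (Set.univ : Set Y) ≤ b :=
        EMetric.diam_le fun y₁ _ y₂ _ => h y₁ y₂
      exact absurd hb (not_lt.mpr this)
    obtain ⟨y₁, y₂, hy⟩ := this
    set d := dist y₁ y₂ with hd
    have hbtop : b ≠ ⊤ := ne_top_of_lt hy
    have hyd : edist y₁ y₂ = ENNReal.ofReal d := edist_dist y₁ y₂
    have hβd : b.toReal < d := by
      rw [hyd] at hy
      exact (ENNReal.lt_ofReal_iff_toReal_lt hbtop).mp hy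
    set β := b.toReal with hβ
    have hβ0 : 0 ≤ β := ENNReal.toReal_nonneg
    set ε : ℝ := min ((d - β) / 4) (1 / 2) with hε
    have hε0 : 0 < ε := by
      apply lt_min <;> [linarith; norm_num]
    have hε1 : ε ≤ 1 / 2 := min_le_right _ _
    have hε2 : ε ≤ (d - β) / 4 := min_le_left _ _
    set r : ℝ := dist pinf y₁ + dist pinf y₂ + 2 with hr
    have hr0 : 0 < r := by
      have := dist_nonneg (x := pinf) (y := y₁)
      have := dist_nonneg (x := pinf) (y := y₂)
      linarith
    have hεr : ε < r := by
      have := dist_nonneg (x := pinf) (y := y₁)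
      have := dist_nonneg (x := pinf) (y := y₂)
      linarith
    obtain ⟨i₀, hi₀⟩ := hGH r hr0 ε hε0 hεr
    rw [eventually_atTop]
    refine ⟨i₀, fun i hi => ?_⟩
    obtain ⟨f, hfp, hfd, hfsurj⟩ := hi₀ i hi
    have hd1 : dist y₁ y₂ ≥ 0 := dist_nonneg
    have hy₁ : y₁ ∈ ball pinf (r - ε) := by
      rw [mem_ball, dist_comm]
      have := dist_nonneg (x := pinf) (y := y₂)
      simp only [hr]; linarith
    have hy₂ : y₂ ∈ ball pinf (r - ε) := by
      rw [mem_ball, dist_comm]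
      have := dist_nonneg (x := pinf) (y := y₁)
      simp only [hr]; linarith
    obtain ⟨z₁, hz₁m, hz₁d⟩ := (Metric.mem_thickening_iff).mp (hfsurj hy₁)
    obtain ⟨z₂, hz₂m, hz₂d⟩ := (Metric.mem_thickening_iff).mp (hfsurj hy₂)
    obtain ⟨x₁, hx₁b, rfl⟩ := hz₁m
    obtain ⟨x₂, hx₂b, rfl⟩ := hz₂m
    have hff : dist (f x₁) (f x₂) > d - 2 * ε := by
      have t1 := dist_triangle y₁ (f x₁) (f x₂)
      have t2 := dist_triangle (f x₁) (f x₂) y₂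
      have t3 := dist_triangle y₁ (f x₁) y₂
      have : d ≤ dist y₁ (f x₁) + dist (f x₁) (f x₂) + dist (f x₂) y₂ := by
        have t4 := dist_triangle y₁ (f x₁) y₂
        have t5 := dist_triangle (f x₁) (f x₂) y₂
        simp only [hd]; linarith
      have h2 : dist (f x₂) y₂ < ε := by rw [dist_comm]; exact hz₂d
      linarith
    have hxx : dist x₁ x₂ > d - 3 * ε := by
      have := hfd x₁ hx₁b x₂ hx₂b
      rw [abs_lt] at this
      linarith
    have hβlt : β < dist x₁ x₂ := by linarith
    calc b = ENNReal.ofReal β := (ENNReal.ofReal_toReal hbtop).symm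
      _ < ENNReal.ofReal (dist x₁ x₂) := by
          rw [ENNReal.ofReal_lt_ofReal_iff (by linarith)]
          exact hβlt
      _ = edist x₁ x₂ := (edist_dist x₁ x₂).symm
      _ ≤ EMetric.diam (Set.univ : Set (X i)) :=
          EMetric.edist_le_diam_of_mem (mem_univ _) (mem_univ _)
  · -- upper bound
    intro b hb
    have hLtop : EMetric.diam (Set.univ : Set Y) ≠ ⊤ := ne_top_of_lt hb
    set D : ℝ := (EMetric.diam (Set.univ : Set Y)).toReal with hD
    have hD0 : 0 ≤ D := ENNReal.toReal_nonneg
    have hdistY : ∀ y z : Y, dist y z ≤ D := by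
      intro y z
      have h1 : edist y z ≤ EMetric.diam (Set.univ : Set Y) :=
        EMetric.edist_le_diam_of_mem (mem_univ _) (mem_univ _)
      have := ENNReal.toReal_mono hLtop h1
      rwa [← dist_edist] at this
    obtain ⟨c, hc0, hc1, hc2⟩ := ENNReal.lt_iff_exists_real_btwn.mp hb
    have hDc : D < c := by
      have := (ENNReal.lt_ofReal_iff_toReal_lt hLtop).mp hc1
      exact this
    set δ : ℝ := c - D with hδ
    have hδ0 : 0 < δ := by linarith
    set ε : ℝ := min (δ / 2) (1 / 2) with hε
    have hε0 : 0 < ε := by apply lt_min <;> [linarith; norm_num]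
    have hε1 : ε ≤ 1 / 2 := min_le_right _ _
    have hε2 : ε ≤ δ / 2 := min_le_left _ _
    set r : ℝ := 2 * D + 2 with hr
    have hr0 : 0 < r := by linarith
    have hεr : ε < r := by linarith
    obtain ⟨i₀, hi₀⟩ := hGH r hr0 ε hε0 hεr
    rw [eventually_atTop]
    refine ⟨i₀, fun i hi => ?_⟩
    obtain ⟨f, hfp, hfd, hfsurj⟩ := hi₀ i hi
    -- no point of X i is at distance ≥ 2D + 2 from p i
    have hbdd : ∀ x : X i, dist (p i) x < 2 * D + 2 := by
      intro x
      by_contra h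
      push_neg at h
      obtain ⟨z, hz1, hz2⟩ := exists_dist_btwn (hlen i) (p i) x
        (s := 2 * D + 1) (δ := 1 / 2) (by linarith) (by linarith) (by norm_num)
      have hzball : z ∈ ball (p i) r := by
        rw [mem_ball, dist_comm]
        simp only [hr]; linarith
      have hpball : p i ∈ ball (p i) r := mem_ball_self hr0
      have := hfd (p i) hpball z hzball
      rw [hfp, abs_lt] at this
      have hY := hdistY pinf (f z)
      linarith
    -- hence all pairwise distances ≤ D + ε
    refine lt_of_le_of_lt ?_ hc2
    have : EMetric.diam (Set.univ : Set (X i)) ≤ ENNReal.ofReal (D + ε) := by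
      apply EMetric.diam_le
      intro x _ y _
      rw [edist_dist]
      apply ENNReal.ofReal_le_ofReal
      have hxball : x ∈ ball (p i) r := by
        rw [mem_ball, dist_comm]; simp only [hr]; exact hbdd x
      have hyball : y ∈ ball (p i) r := by
        rw [mem_ball, dist_comm]; simp only [hr]; exact hbdd y
      have h1 := hfd x hxball y hyball
      rw [abs_lt] at h1
      have h2 : dist (f x) (f y) ≤ D := hdistY (f x) (f y)
      linarith
    refine le_trans this ?_
    apply ENNReal.ofReal_le_ofReal
    linarith
end

section
/- Let (X,d,m) be a metric measure space and (E,F) a regular strongly local Dirichlet form on L²(X,m) whose part (E^D, F^D) on each ball D = B(p,R) has discrete spectrum {λ_j^{(R)}}. Assume the capacity condition: there are κ ∈ (0,1) and C_cap > 1 such that for every ball B = B(x,r) there exists a cut-off φ ∈ F with 0 ≤ φ ≤ 1, φ = 1 on a neighborhood of κB, supp φ ⊂ B, and E(φ,φ) ≤ C_cap V(r)/Ψ(r). Assume also m(B(x,r)) ≍ V(r) with V doubling, (X,d) geodesic, and Ψ satisfying two-sided power bounds. Then there is a constant C₁ (depending only on the structural constants) with λ_j^{(R)} ≤ C₁ /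 Ψ(R/j) for all R > 0 and j ≥ 1. -/
open MeasureTheory Metric Set

private lemma chain_lemma' {X : Type*} [MetricSpace X]
    (hgeo : ∀ x y : X, ∃ z : X, dist x z = dist x y / 2 ∧ dist z y = dist x y / 2) :
    ∀ (n : ℕ) (x y : X), ∃ c : ℕ → X, c 0 = x ∧ c (2^n) = y ∧
      ∀ k l : ℕ, k ≤ l → l ≤ 2^n →
        dist (c k) (c l) = ((l : ℝ) - k) / 2^n * dist x y := by
  intro n
  induction n with
  | zero =>
    intro x y
    refine ⟨fun k => if k = 0 then x else y, by simp, by simp, ?_⟩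
    intro k l hkl hl
    simp only [pow_zero] at hl
    interval_cases l <;> interval_cases k <;> simp
  | succ n ih =>
    intro x y
    obtain ⟨z, hz1, hz2⟩ := hgeo x y
    obtain ⟨c₁, hc₁0, hc₁1, hc₁⟩ := ih x z
    obtain ⟨c₂, hc₂0, hc₂1, hc₂⟩ := ih z y
    have hposN : 0 < 2 ^ n := Nat.pow_pos (by norm_num)
    have h2pos : (0:ℝ) < 2 ^ n := by positivity
    refine ⟨fun k => if k ≤ 2^n then c₁ k else c₂ (k - 2^n), by simp [hc₁0], ?_, ?_⟩
    · have h1 : ¬ (2^(n+1) ≤ 2^n) := by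
        have : 2^n < 2^(n+1) := Nat.pow_lt_pow_right (by norm_num) (Nat.lt_succ_self n)
        omega
      have h2 : 2^(n+1) - 2^n = 2^n := by
        have : 2^(n+1) = 2^n + 2^n := by ring
        omega
      simp only [h1, if_false, h2, hc₂1]
    · intro k l hkl hl
      have hN2 : 2^(n+1) = 2^n + 2^n := by ring
      by_cases hk : k ≤ 2^n <;> by_cases hl' : l ≤ 2^n
      · simp only [hk, hl', if_true]
        rw [hc₁ k l hkl hl', hz1, pow_succ]
        ring
      · -- k ≤ 2^n < l
        simp only [hk, hl', if_true, if_false]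
        have hl2 : 2^n ≤ l := by omega
        have hlN : l ≤ 2^n + 2^n := by omega
        have A := hc₁ k (2^n) hk le_rfl
        rw [hc₁1, hz1] at A
        push_cast at A
        have B := hc₂ 0 (l - 2^n) (Nat.zero_le _) (by omega)
        rw [hc₂0, hz2] at B
        rw [Nat.cast_sub hl2] at B
        push_cast at B
        rw [sub_zero] at B
        have C := hc₁ 0 k (Nat.zero_le _) hk
        rw [hc₁0, hz1] at C
        push_cast at C
        rw [sub_zero] at C
        have D := hc₂ (l - 2^n) (2^n) (by omega) le_rfl
        rw [hc₂1, hz2, Nat.cast_sub hl2] at D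
        push_cast at D
        have hub : dist (c₁ k) (c₂ (l - 2^n)) ≤ ((l:ℝ) - k) / 2^(n+1) * dist x y := by
          calc dist (c₁ k) (c₂ (l - 2^n)) ≤ dist (c₁ k) z + dist z (c₂ (l - 2^n)) :=
                dist_triangle _ _ _
            _ = ((l:ℝ) - k) / 2^(n+1) * dist x y := by
                rw [A, B, pow_succ]; field_simp; ring
        have hlb : ((l:ℝ) - k) / 2^(n+1) * dist x y ≤ dist (c₁ k) (c₂ (l - 2^n)) := by
          have tri : dist x y ≤ dist x (c₁ k) + dist (c₁ k) (c₂ (l - 2^n))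
              + dist (c₂ (l - 2^n)) y := dist_triangle4 _ _ _ _
          rw [C, D] at tri
          have key : ((l:ℝ) - k) / 2^(n+1) * dist x y
              = dist x y - (k:ℝ) / 2^n * (dist x y / 2)
                - ((2:ℝ)^n - ((l:ℝ) - 2^n)) / 2^n * (dist x y / 2) := by
            rw [pow_succ]; field_simp; ring
          linarith
        linarith
      · omega
      · -- both > 2^n
        simp only [hk, hl', if_false]
        have hk2 : 2^n ≤ k := by omega
        have h := hc₂ (k - 2^n) (l - 2^n) (by omega) (by omega)
        rw [hz2, Nat.cast_sub (by omega : 2^n ≤ l), Nat.cast_sub hk2] at h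
        rw [h, pow_succ]
        push_cast
        ring

private lemma E_sum_disj' {X : Type*} {F : Set (X → ℝ)} {E : (X → ℝ) → ℝ}
    (hF_zero : (0 : X → ℝ) ∈ F) (hE_zero : E 0 = 0)
    (hF_add : ∀ f g, f ∈ F → g ∈ F → f + g ∈ F)
    (hE_disj : ∀ f g, f ∈ F → g ∈ F →
      Disjoint (Function.support f) (Function.support g) → E (f + g) = E f + E g)
    {j : ℕ} (ψ : Fin j → X → ℝ) (hψF : ∀ i, ψ i ∈ F)
    (hdisj : ∀ i i', i ≠ i' →
      Disjoint (Function.support (ψ i)) (Function.support (ψ i')))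
    (s : Finset (Fin j)) :
    (∑ i ∈ s, ψ i) ∈ F ∧ E (∑ i ∈ s, ψ i) = ∑ i ∈ s, E (ψ i) := by
  classical
  induction s using Finset.induction_on with
  | empty => simpa using ⟨hF_zero, hE_zero⟩
  | @insert a s ha ih =>
    have hsum_supp : Function.support (∑ i ∈ s, ψ i) ⊆
        ⋃ i ∈ s, Function.support (ψ i) := by
      intro x hx
      by_contra hxn
      apply hx
      rw [Finset.sum_apply]
      refine Finset.sum_eq_zero fun i hi => ?_
      by_contra hne
      exact hxn (Set.mem_biUnion hi hne)
    have hd : Disjoint (Function.support (ψ a)) (Function.support (∑ i ∈ s, ψ i)) := by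
      refine Disjoint.mono_right hsum_supp ?_
      rw [Set.disjoint_iUnion₂_right]
      intro i hi
      exact hdisj a i (by rintro rfl; exact ha hi)
    rw [Finset.sum_insert ha, Finset.sum_insert ha]
    exact ⟨hF_add _ _ (hψF a) ih.1,
      by rw [hE_disj _ _ (hψF a) ih.1 hd, ih.2]⟩

set_option maxHeartbeats 1000000

/-- Weyl-type eigenvalue upper bound: under the capacity condition, volume
doubling and the max-min variational principle, the `j`-th Dirichlet
eigenvalue on the ball `B(p,R)` is at most `C₁ / Ψ(R/j)`. -/
theorem eigenvalue_upper_bound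
    {X : Type*} [MetricSpace X] [MeasurableSpace X] [BorelSpace X]
    (m : Measure X) (p : X)
    (F : Set (X → ℝ)) (E : (X → ℝ) → ℝ) (lam : ℝ → ℕ → ℝ)
    (V Ψ : ℝ → ℝ) (Cv C₀ α α' β β' κ Ccap : ℝ)
    (hCv : 1 ≤ Cv) (hC₀ : 1 < C₀) (hα : 0 < α) (hαα' : α ≤ α')
    (hβ : 1 < β) (hββ' : β ≤ β') (hκ : κ ∈ Set.Ioo (0:ℝ) 1) (hCcap : 1 < Ccap)
    -- (X,d) is geodesic: midpoints exist
    (hgeo : ∀ x y : X, ∃ z : X,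
      dist x z = dist x y / 2 ∧ dist z y = dist x y / 2)
    -- V and Ψ positive, increasing, with two-sided power bounds
    (hV_pos : ∀ r : ℝ, 0 < r → 0 < V r)
    (hΨ_pos : ∀ r : ℝ, 0 < r → 0 < Ψ r)
    (hV_scal : ∀ r R' : ℝ, 0 < r → r ≤ R' →
      Cv⁻¹ * (R' / r) ^ α ≤ V R' / V r ∧ V R' / V r ≤ Cv * (R' / r) ^ α')
    (hΨ_scal : ∀ r R' : ℝ, 0 < r → r ≤ R' →
      C₀⁻¹ * (R' / r) ^ β ≤ Ψ R' / Ψ r ∧ Ψ R' / Ψ r ≤ C₀ * (R' / r) ^ β')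
    -- volume comparability m(B(x,r)) ≍ V(r)
    (hm : ∀ (x : X) (r : ℝ), 0 < r →
      ENNReal.ofReal (Cv⁻¹ * V r) ≤ m (ball x r) ∧
      m (ball x r) ≤ ENNReal.ofReal (Cv * V r))
    -- the domain F is a linear subspace and E is a nonnegative quadratic form,
    -- strongly local on disjoint supports
    (hF_add : ∀ f g, f ∈ F → g ∈ F → f + g ∈ F)
    (hF_smul : ∀ (c : ℝ) f, f ∈ F → c • f ∈ F)
    (hE_nonneg : ∀ f ∈ F, 0 ≤ E f)
    (hE_smul : ∀ (c : ℝ) f, f ∈ F → E (c • f) = c ^ 2 * E f)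
    (hE_disj : ∀ f g, f ∈ F → g ∈ F →
      Disjoint (Function.support f) (Function.support g) →
      E (f + g) = E f + E g)
    -- the capacity condition
    (hcap : ∀ (x : X) (r : ℝ), 0 < r → ∃ φ ∈ F, Continuous φ ∧
      (∀ z, φ z ∈ Set.Icc (0:ℝ) 1) ∧
      (∀ z ∈ ball x (κ * r), φ z = 1) ∧
      Function.support φ ⊆ ball x r ∧
      E φ ≤ Ccap * V r / Ψ r)
    -- the max-min variational principle for the Dirichlet eigenvalues λ_j^{(R)}
    (hminmax : ∀ R' : ℝ, 0 < R' → ∀ j : ℕ, 1 ≤ j → ∀ φ : Fin j → X → ℝ,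
      (∀ i, φ i ∈ F) →
      (∀ i, Function.support (φ i) ⊆ ball p R') →
      LinearIndependent ℝ φ →
      ∀ c : ℝ,
        (∀ a : Fin j → ℝ, a ≠ 0 →
          E (∑ i, a i • φ i) ≤ c * ∫ x, (∑ i, a i * φ i x) ^ 2 ∂m) →
        lam R' j ≤ c) :
    ∃ C₁ : ℝ, 0 < C₁ ∧ ∀ R' : ℝ, 0 < R' → ∀ j : ℕ, 1 ≤ j →
      lam R' j ≤ C₁ / Ψ (R' / j) := by
  classical
  obtain ⟨hκ0, hκ1⟩ := hκ
  have hCv0 : (0:ℝ) < Cv := by linarith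
  have hC₀0 : (0:ℝ) < C₀ := by linarith
  have hCcap0 : (0:ℝ) < Ccap := by linarith
  have hκinv : (0:ℝ) < κ⁻¹ := by positivity
  have hrpow1 : (0:ℝ) < κ⁻¹ ^ α' := Real.rpow_pos_of_pos hκinv _
  have hrpow2 : (0:ℝ) < (16:ℝ) ^ β' := Real.rpow_pos_of_pos (by norm_num) _
  refine ⟨Ccap * Cv^2 * κ⁻¹ ^ α' * C₀ * (16:ℝ) ^ β', by positivity, ?_⟩
  intro R' hR' j hj
  have hj1 : (1:ℝ) ≤ (j:ℝ) := by exact_mod_cast hj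
  have hjpos : (0:ℝ) < (j:ℝ) := by linarith
  -- Step 1: the space is unbounded
  have hfar : ∃ q : X, R'/2 < dist p q := by
    by_contra hcon
    push_neg at hcon
    set t : ℝ := (Cv^3 + 1) ^ α⁻¹ with ht
    have hbase : (0:ℝ) < Cv^3 + 1 := by positivity
    have htpos : 0 < t := Real.rpow_pos_of_pos hbase _
    have htα : t ^ α = Cv^3 + 1 := by
      rw [ht, ← Real.rpow_mul hbase.le, inv_mul_cancel₀ (ne_of_gt hα), Real.rpow_one]
    have ht1 : 1 ≤ t := by
      by_contra hc
      push_neg at hc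
      have := Real.rpow_le_one htpos.le hc.le hα.le
      rw [htα] at this
      have hCv3 : (1:ℝ) ≤ Cv^3 := one_le_pow₀ hCv
      linarith
    have hVR : 0 < V R' := hV_pos R' hR'
    have hVt : 0 < V (t * R') := hV_pos _ (by positivity)
    have hsub : ball p (t * R') ⊆ ball p R' := by
      intro w hw
      have := hcon w
      rw [mem_ball, dist_comm]
      linarith
    have h1 := (hm p (t * R') (by positivity)).1
    have h2 := (hm p R' hR').2
    have hle : ENNReal.ofReal (Cv⁻¹ * V (t * R')) ≤ ENNReal.ofReal (Cv * V R') :=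
      le_trans h1 (le_trans (measure_mono hsub) h2)
    have hle' : Cv⁻¹ * V (t * R') ≤ Cv * V R' :=
      (ENNReal.ofReal_le_ofReal_iff (by positivity)).1 hle
    have hlow := (hV_scal R' (t * R') hR' (le_mul_of_one_le_left hR'.le ht1)).1
    have htr : t * R' / R' = t := by field_simp
    rw [htr, htα] at hlow
    -- hlow : Cv⁻¹ * (Cv^3+1) ≤ V (t*R') / V R'
    have hlow' : Cv⁻¹ * (Cv^3 + 1) * V R' ≤ V (t * R') := by
      have h := (le_div_iff₀ hVR).1 hlow
      linarith
    have e1 : V (t * R') ≤ Cv^2 * V R' := by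
      have h := mul_le_mul_of_nonneg_left hle' hCv0.le
      calc V (t * R') = Cv * (Cv⁻¹ * V (t * R')) := by field_simp
        _ ≤ Cv * (Cv * V R') := h
        _ = Cv^2 * V R' := by ring
    have e2 : (Cv^2 + Cv⁻¹) * V R' ≤ V (t * R') := by
      have e : Cv⁻¹ * (Cv^3 + 1) = Cv^2 + Cv⁻¹ := by field_simp
      rwa [e] at hlow'
    nlinarith [mul_pos (show (0:ℝ) < Cv⁻¹ by positivity) hVR]
  obtain ⟨q, hq⟩ := hfar
  set d : ℝ := dist p q with hd
  have hdpos : 0 < d := by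
    have : 0 < R'/2 := by linarith
    linarith
  -- Step 2: choose dyadic scale
  obtain ⟨n, hn⟩ : ∃ n : ℕ, 4*(j:ℝ)*d/R' < 2^n :=
    pow_unbounded_of_one_lt _ one_lt_two
  have h2n : (0:ℝ) < 2^n := by positivity
  have hstep : d / 2^n < R'/(4*j) := by
    rw [div_lt_iff₀ hR'] at hn
    rw [div_lt_div_iff₀ h2n (by positivity)]
    nlinarith
  have hstep0 : 0 < d / 2^n := by positivity
  -- Step 3: the chain
  obtain ⟨c, hc0, hcN, hcdist⟩ := chain_lemma' hgeo n p q
  -- Step 4: the index k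
  have hPex : ∃ k : ℕ, R'/(4*j) ≤ (k:ℝ) * d / 2^n := by
    refine ⟨2^n, ?_⟩
    have hcast : ((2^n : ℕ):ℝ) = 2^n := by push_cast; ring
    rw [hcast]
    have h₁ : (2:ℝ)^n * d / 2^n = d := by field_simp
    rw [h₁]
    have : R'/(4*j) ≤ R'/4 := by
      apply div_le_div_of_nonneg_left hR'.le (by norm_num)
      linarith
    linarith
  set k : ℕ := Nat.find hPex with hkdef
  have hk_spec : R'/(4*j) ≤ (k:ℝ) * d / 2^n := Nat.find_spec hPex
  have hk1 : 1 ≤ k := by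
    rcases Nat.eq_zero_or_pos k with h | h
    · exfalso
      rw [h] at hk_spec
      simp only [Nat.cast_zero, zero_mul, zero_div] at hk_spec
      have : 0 < R'/(4*j) := by positivity
      linarith
    · exact h
  have hk_prev : ¬ (R'/(4*j) ≤ ((k-1 : ℕ):ℝ) * d / 2^n) := Nat.find_min hPex (by omega)
  push_neg at hk_prev
  have hkcast : ((k-1 : ℕ):ℝ) = (k:ℝ) - 1 := by
    rw [Nat.cast_sub hk1]; norm_num
  rw [hkcast] at hk_prev
  have hs_ub : (k:ℝ) * d / 2^n < R'/(2*j) := by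
    have e : (k:ℝ) * d / 2^n = ((k:ℝ)-1) * d / 2^n + d / 2^n := by ring
    have e2 : R'/(2*j) = R'/(4*j) + R'/(4*j) := by ring
    rw [e, e2]
    linarith
  set s : ℝ := (k:ℝ) * d / 2^n with hsdef
  have hs_lb : R'/(4*j) ≤ s := hk_spec
  have hs_pos : 0 < s := lt_of_lt_of_le (by positivity) hs_lb
  -- Step 5: the points
  have hi_lt : ∀ i : Fin j, ((i:ℕ):ℝ) * s < R'/2 := by
    intro i
    have hij : ((i:ℕ):ℝ) ≤ (j:ℝ) - 1 := by
      have : (i:ℕ) + 1 ≤ j := i.isLt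
      have := (Nat.cast_le (α := ℝ)).2 this
      push_cast at this
      linarith
    calc ((i:ℕ):ℝ) * s ≤ ((j:ℝ) - 1) * s := by
          apply mul_le_mul_of_nonneg_right hij hs_pos.le
      _ < (j:ℝ) * (R'/(2*j)) := by
          apply lt_of_le_of_lt (mul_le_mul_of_nonneg_left hs_ub.le (by linarith))
          apply mul_lt_mul_of_pos_right (by linarith) (by positivity)
      _ = R'/2 := by field_simp
  have hik : ∀ i : Fin j, (i:ℕ) * k ≤ 2^n := by
    intro i
    by_contra hcon
    push_neg at hcon
    have h1 : (2^n : ℝ) ≤ (((i:ℕ) * k : ℕ):ℝ) := by exact_mod_cast hcon.le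
    have h2 : (((i:ℕ)*k : ℕ):ℝ) * (d/2^n) = ((i:ℕ):ℝ) * s := by
      push_cast; rw [hsdef]; ring
    have h3 : (2^n : ℝ) * (d/2^n) = d := by field_simp
    have := mul_le_mul_of_nonneg_right h1 hstep0.le
    rw [h2, h3] at this
    have := hi_lt i
    linarith
  set pts : Fin j → X := fun i => c ((i:ℕ) * k) with hpts
  have hdistp : ∀ i : Fin j, dist p (pts i) < R'/2 := by
    intro i
    have := hcdist 0 ((i:ℕ)*k) (Nat.zero_le _) (hik i)
    rw [hc0] at this
    rw [hpts, this]
    have e : ((((i:ℕ)*k : ℕ)):ℝ) - (0:ℕ) = ((i:ℕ):ℝ) * (k:ℝ) := by push_cast; ring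
    rw [e]
    have e2 : ((i:ℕ):ℝ) * (k:ℝ) / 2^n * d = ((i:ℕ):ℝ) * s := by rw [hsdef]; ring
    rw [e2]
    exact hi_lt i
  have hsep : ∀ i i' : Fin j, i ≠ i' → R'/(4*j) ≤ dist (pts i) (pts i') := by
    have key : ∀ i i' : Fin j, (i:ℕ) < (i':ℕ) → R'/(4*j) ≤ dist (pts i) (pts i') := by
      intro i i' hii
      have hle : (i:ℕ)*k ≤ (i':ℕ)*k := Nat.mul_le_mul_right k hii.le
      have := hcdist ((i:ℕ)*k) ((i':ℕ)*k) hle (hik i')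
      rw [hpts]
      rw [this]
      have e : ((((i':ℕ)*k:ℕ)):ℝ) - (((i:ℕ)*k:ℕ):ℝ) = (((i':ℕ):ℝ) - (i:ℕ)) * k := by
        push_cast; ring
      rw [e]
      have h1 : (1:ℝ) ≤ ((i':ℕ):ℝ) - ((i:ℕ):ℝ) := by
        have : (i:ℕ) + 1 ≤ (i':ℕ) := hii
        have := (Nat.cast_le (α := ℝ)).2 this
        push_cast at this
        linarith
      calc R'/(4*j) ≤ s := hs_lb
        _ = 1 * ((k:ℝ) / 2^n * d) := by rw [hsdef]; ring
        _ ≤ (((i':ℕ):ℝ) - (i:ℕ)) * ((k:ℝ) / 2^n * d) :=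
            mul_le_mul_of_nonneg_right h1 (by positivity)
        _ = (((i':ℕ):ℝ) - (i:ℕ)) * k / 2^n * dist p q := by rw [hd]; ring
    intro i i' hii
    rcases lt_trichotomy (i:ℕ) (i':ℕ) with h | h | h
    · exact key i i' h
    · exact absurd (Fin.ext h) hii
    · rw [dist_comm]; exact key i' i h
  -- Step 6: the radius and balls
  set r : ℝ := R'/(16*j) with hrdef
  have hr : 0 < r := by positivity
  have h4r : 4 * r = R'/(4*j) := by rw [hrdef]; ring
  have hball_sub : ∀ i, ball (pts i) r ⊆ ball p R' := by
    intro i w hw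
    rw [mem_ball] at hw ⊢
    have h1 := hdistp i
    have htri : dist w p ≤ dist w (pts i) + dist (pts i) p := dist_triangle _ _ _
    rw [dist_comm (pts i) p] at htri
    have hr2 : r ≤ R'/2 := by
      rw [hrdef]
      apply div_le_div_of_nonneg_left hR'.le (by norm_num)
      linarith
    linarith
  have hball_disj : ∀ i i', i ≠ i' → Disjoint (ball (pts i) r) (ball (pts i') r) := by
    intro i i' hii
    rw [Set.disjoint_left]
    intro w hw hw'
    rw [mem_ball] at hw hw'
    have := hsep i i' hii
    have htri : dist (pts i) (pts i') ≤ dist (pts i) w + dist w (pts i') :=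
      dist_triangle _ _ _
    rw [dist_comm (pts i) w] at htri
    rw [← h4r] at this
    linarith
  -- Step 7: the cutoffs
  choose φ hφF hφcont hφ01 hφone hφsupp hφE using fun i : Fin j => hcap (pts i) r hr
  have hκr : 0 < κ * r := by positivity
  have hκrr : κ * r ≤ r := mul_le_of_le_one_left hr.le hκ1.le
  have hsuppP : ∀ i, Function.support (φ i) ⊆ ball p R' :=
    fun i => (hφsupp i).trans (hball_sub i)
  have hsupp_disj : ∀ i i', i ≠ i' →
      Disjoint (Function.support (φ i)) (Function.support (φ i')) :=
    fun i i' hii => ((hball_disj i i' hii).mono (hφsupp i) (hφsupp i'))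
  have hφ_at : ∀ i, φ i (pts i) = 1 :=
    fun i => hφone i (pts i) (mem_ball_self hκr)
  have hφ_ne : ∀ i i', i ≠ i' → φ i (pts i') = 0 := by
    intro i i' hii
    by_contra hne
    have : pts i' ∈ ball (pts i) r := hφsupp i hne
    rw [mem_ball, dist_comm] at this
    have := hsep i i' hii
    rw [← h4r] at this
    linarith
  -- Step 8: linear independence
  have hLI : LinearIndependent ℝ φ := by
    rw [Fintype.linearIndependent_iff]
    intro g hg i
    have := congrFun hg (pts i)
    rw [Finset.sum_apply] at this
    simp only [Pi.smul_apply, smul_eq_mul, Pi.zero_apply] at this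
    rw [Finset.sum_eq_single i (fun i' _ hii' => by rw [hφ_ne i' i hii', mul_zero])
      (fun h => absurd (Finset.mem_univ i) h)] at this
    rw [hφ_at i, mul_one] at this
    exact this
  -- positivity facts
  have hVr : 0 < V r := hV_pos r hr
  have hVκr : 0 < V (κ*r) := hV_pos _ hκr
  have hΨr : 0 < Ψ r := hΨ_pos r hr
  have hΨRj : 0 < Ψ (R'/j) := hΨ_pos _ (by positivity)
  -- F contains 0 and E 0 = 0
  have i0 : Fin j := ⟨0, by omega⟩
  have hF0 : (0 : X → ℝ) ∈ F := by
    have := hF_smul 0 (φ i0) (hφF i0)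
    rwa [zero_smul] at this
  have hE0 : E (0 : X → ℝ) = 0 := by
    have := hE_smul 0 (φ i0) (hφF i0)
    rw [zero_smul] at this
    simpa using this
  -- finiteness of ball measures
  have hfin : ∀ (x : X) (ρ : ℝ), 0 < ρ → m (ball x ρ) < ⊤ :=
    fun x ρ hρ => lt_of_le_of_lt ((hm x ρ hρ).2) ENNReal.ofReal_lt_top
  -- Step 9: apply minmax
  set cR : ℝ := Ccap * Cv * V r / (Ψ r * V (κ*r)) with hcRdef
  have hcR0 : 0 ≤ cR := by positivity
  have hlam : lam R' j ≤ cR := by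
    apply hminmax R' hR' j hj φ hφF hsuppP hLI cR
    intro a _
    set S : ℝ := ∑ i, (a i)^2 with hSdef
    have hS0 : 0 ≤ S := Finset.sum_nonneg fun i _ => sq_nonneg _
    -- energy bound
    have hEbound : E (∑ i, a i • φ i) ≤ S * (Ccap * V r / Ψ r) := by
      have hψF : ∀ i : Fin j, a i • φ i ∈ F := fun i => hF_smul _ _ (hφF i)
      have hψd : ∀ i i', i ≠ i' → Disjoint (Function.support (a i • φ i))
          (Function.support (a i' • φ i')) := fun i i' hii =>
        (hsupp_disj i i' hii).mono (Function.support_const_smul_subset _ _)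
          (Function.support_const_smul_subset _ _)
      have := (E_sum_disj' hF0 hE0 hF_add hE_disj _ hψF hψd Finset.univ).2
      rw [this]
      calc ∑ i, E (a i • φ i) = ∑ i, (a i)^2 * E (φ i) := by
            refine Finset.sum_congr rfl fun i _ => hE_smul _ _ (hφF i)
        _ ≤ ∑ i, (a i)^2 * (Ccap * V r / Ψ r) := by
            refine Finset.sum_le_sum fun i _ =>
              mul_le_mul_of_nonneg_left (hφE i) (sq_nonneg _)
        _ = S * (Ccap * V r / Ψ r) := by rw [hSdef, Finset.sum_mul]
    -- integral lower bound
    have hint : S * (Cv⁻¹ * V (κ*r)) ≤ ∫ x, (∑ i, a i * φ i x)^2 ∂m := by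
      set g : X → ℝ := fun x => ∑ i, a i * φ i x with hgdef
      have hg_cont : Continuous g :=
        continuous_finset_sum _ fun i _ => continuous_const.mul (hφcont i)
      set M : ℝ := ∑ i, |a i| with hMdef
      have hgabs : ∀ x, |g x| ≤ M := by
        intro x
        calc |g x| ≤ ∑ i, |a i * φ i x| := Finset.abs_sum_le_sum_abs _ _
          _ ≤ ∑ i, |a i| := by
              refine Finset.sum_le_sum fun i _ => ?_
              rw [abs_mul]
              have h01 := hφ01 i x
              have : |φ i x| ≤ 1 := abs_le.2 ⟨by linarith [h01.1], h01.2⟩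
              calc |a i| * |φ i x| ≤ |a i| * 1 :=
                    mul_le_mul_of_nonneg_left this (abs_nonneg _)
                _ = |a i| := mul_one _
      have hg0 : ∀ x, x ∉ ball p R' → g x = 0 := by
        intro x hx
        rw [hgdef]
        refine Finset.sum_eq_zero fun i _ => ?_
        have : φ i x = 0 := by
          by_contra hne
          exact hx (hsuppP i hne)
        rw [this, mul_zero]
      -- g² is integrable
      have hibound : Integrable ((ball p R').indicator (fun _ => M^2)) m := by
        rw [integrable_indicator_iff measurableSet_ball]
        exact integrableOn_const (hfin p R' hR').ne
      have hg2int : Integrable (fun x => (g x)^2) m := by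
        refine hibound.mono' ((hg_cont.pow 2).aestronglyMeasurable)
          (Filter.Eventually.of_forall fun x => ?_)
        by_cases hx : x ∈ ball p R'
        · rw [Set.indicator_of_mem hx, Real.norm_eq_abs, abs_pow]
          exact pow_le_pow_left₀ (abs_nonneg _) (hgabs x) 2
        · rw [Set.indicator_of_notMem hx, hg0 x hx]
          simp
      -- the comparison function
      set h : X → ℝ := fun x => ∑ i, (ball (pts i) (κ*r)).indicator (fun _ => (a i)^2) x
        with hhdef
      have hh_int : Integrable h m := by
        refine integrable_finset_sum _ fun i _ => ?_
        rw [integrable_indicator_iff measurableSet_ball]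
        exact integrableOn_const (hfin _ _ hκr).ne
      have hκball : ∀ i, ball (pts i) (κ*r) ⊆ ball (pts i) r :=
        fun i => ball_subset_ball hκrr
      have hpt : ∀ x, h x ≤ (g x)^2 := by
        intro x
        by_cases hex : ∃ i, x ∈ ball (pts i) (κ*r)
        · obtain ⟨i, hi⟩ := hex
          have honly : ∀ i', i' ≠ i → x ∉ ball (pts i') (κ*r) := by
            intro i' hii' hx'
            have := hball_disj i' i hii'
            exact (Set.disjoint_left.1 this (hκball i' hx') (hκball i hi))
          have hh : h x = (a i)^2 := by
            simp only [hhdef]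
            rw [Finset.sum_eq_single i
              (fun i' _ hii' => Set.indicator_of_notMem (honly i' hii') _)
              (fun hc => absurd (Finset.mem_univ i) hc)]
            exact Set.indicator_of_mem hi _
          have hgx : g x = a i := by
            simp only [hgdef]
            rw [Finset.sum_eq_single i (fun i' _ hii' => ?_)
              (fun hc => absurd (Finset.mem_univ i) hc)]
            · rw [hφone i x hi, mul_one]
            · have : φ i' x = 0 := by
                by_contra hne
                have hx1 : x ∈ ball (pts i') r := hφsupp i' hne
                exact Set.disjoint_left.1 (hball_disj i' i hii') hx1 (hκball i hi)
              rw [this, mul_zero]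
          rw [hh, hgx]
        · push_neg at hex
          have : h x = 0 := by
            simp only [hhdef]
            exact Finset.sum_eq_zero fun i _ => Set.indicator_of_notMem (hex i) _
          rw [this]
          exact sq_nonneg _
      have hmono := integral_mono hh_int hg2int hpt
      -- compute ∫ h
      have hinth : ∫ x, h x ∂m = ∑ i, (m (ball (pts i) (κ*r))).toReal * (a i)^2 := by
        simp only [hhdef]
        rw [integral_finset_sum _ (fun i _ => (integrable_indicator_iff measurableSet_ball).2
          (integrableOn_const (hfin _ _ hκr).ne))]
        refine Finset.sum_congr rfl fun i _ => ?_
        rw [integral_indicator_const _ measurableSet_ball]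
        simp [smul_eq_mul, Measure.real]
      have hlower : ∀ i : Fin j, Cv⁻¹ * V (κ*r) ≤ (m (ball (pts i) (κ*r))).toReal := by
        intro i
        have h1 := (hm (pts i) (κ*r) hκr).1
        exact (ENNReal.ofReal_le_iff_le_toReal (ne_of_lt (hfin _ _ hκr))).1 h1
      calc S * (Cv⁻¹ * V (κ*r)) = ∑ i, (a i)^2 * (Cv⁻¹ * V (κ*r)) := by
            rw [hSdef, Finset.sum_mul]
        _ ≤ ∑ i, (m (ball (pts i) (κ*r))).toReal * (a i)^2 := by
            refine Finset.sum_le_sum fun i _ => ?_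
            rw [mul_comm ((m (ball (pts i) (κ*r))).toReal) _]
            exact mul_le_mul_of_nonneg_left (hlower i) (sq_nonneg _)
        _ = ∫ x, h x ∂m := hinth.symm
        _ ≤ ∫ x, (g x)^2 ∂m := hmono
    -- combine
    have hkey : cR * (S * (Cv⁻¹ * V (κ*r))) = S * (Ccap * V r / Ψ r) := by
      rw [hcRdef]
      field_simp
    calc E (∑ i, a i • φ i) ≤ S * (Ccap * V r / Ψ r) := hEbound
      _ = cR * (S * (Cv⁻¹ * V (κ*r))) := hkey.symm
      _ ≤ cR * ∫ x, (∑ i, a i * φ i x)^2 ∂m := mul_le_mul_of_nonneg_left hint hcR0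
  -- Step 10: compare cR with C₁ / Ψ(R'/j)
  refine le_trans hlam ?_
  have hb1 : V r / V (κ*r) ≤ Cv * κ⁻¹ ^ α' := by
    have := (hV_scal (κ*r) r hκr hκrr).2
    have e : r / (κ*r) = κ⁻¹ := by field_simp
    rwa [e] at this
  have hb2 : Ψ (R'/j) ≤ C₀ * (16:ℝ) ^ β' * Ψ r := by
    have hrRj : r ≤ R'/j := by
      rw [hrdef, div_le_div_iff₀ (by positivity) hjpos]
      nlinarith
    have := (hΨ_scal r (R'/j) hr hrRj).2
    have e : (R'/j) / r = 16 := by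
      rw [hrdef]
      field_simp
    rw [e] at this
    rw [div_le_iff₀ hΨr] at this
    linarith
  have hb1' : V r ≤ Cv * κ⁻¹ ^ α' * V (κ*r) := by
    rw [div_le_iff₀ hVκr] at hb1
    linarith
  rw [hcRdef, div_le_div_iff₀ (by positivity) hΨRj]
  have key : V r * Ψ (R'/j) ≤ (Cv * κ⁻¹ ^ α' * V (κ*r)) * (C₀ * (16:ℝ) ^ β' * Ψ r) :=
    mul_le_mul hb1' hb2 hΨRj.le (by positivity)
  calc Ccap * Cv * V r * Ψ (R'/j) = (Ccap * Cv) * (V r * Ψ (R'/j)) := by ring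
    _ ≤ (Ccap * Cv) * ((Cv * κ⁻¹ ^ α' * V (κ*r)) * (C₀ * (16:ℝ) ^ β' * Ψ r)) :=
        mul_le_mul_of_nonneg_left key (by positivity)
    _ = Ccap * Cv^2 * κ⁻¹ ^ α' * C₀ * (16:ℝ) ^ β' * (Ψ r * V (κ*r)) := by ring
end
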